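/- arXiv:1410.2095 — 8 statements merged into one kernel-verified Lean document; each statement's English description precedes it below -/
import Mathlib

section
/- Let V be a real Hilbert space, a : V × V → ℝ a bounded bilinear form (not necessarily symmetric) with coercivity constant α := inf_{v≠0} a(v,v)/‖v‖_V² > 0, and K ⊆ V a nonempty closed convex set. Then for every bounded linear functional f on V there exists a unique u ∈ K such that a(u, v − u) ≥ f(v − u) for all v ∈ K. Moreover, the solution map f ↦ u is Lipschitz continuous from V' to V: if u₁ and u₂ are the solutions corresponding to f₁ and f₂, then ‖u₁ − u₂‖_V ≤ (1/α)‖f₁ − f₂‖_{V'}. -/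
/-!
Uniqueness and the Lipschitz bound follow by testing the inequality for `u₁` with `v = u₂` and the
one for `u₂` with `v = u₁`, adding, and using coercivity. For existence, write `A` for the operator
representing `a` and `F` for the Riesz representative of `f`, and `P` for the metric projection onto
`K`. Then `u` solves the inequality as soon as `u = P (u - ρ (A u - F))`. The projection is
`1`-Lipschitz, and for a small step `ρ > 0` coercivity makes `v ↦ v - ρ A v` a strict contraction, so
Banach's fixed point theorem provides `u`.
-/

open InnerProductSpace NNReal

def IsVISolution {E : Type*} [NormedAddCommGroup E] [NormedSpace ℝ E]
    (a : E →L[ℝ] E →L[ℝ] ℝ) (f : E →L[ℝ] ℝ) (K : Set E) (u : E) : Prop :=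
  u ∈ K ∧ ∀ v ∈ K, f (v - u) ≤ a u (v - u)

section Stability

variable {E : Type*} [NormedAddCommGroup E] [NormedSpace ℝ E]
  {a : E →L[ℝ] E →L[ℝ] ℝ} {α : ℝ} {K : Set E}

theorem IsVISolution.norm_sub_le (hα : 0 < α) (hcoer : ∀ v, α * ‖v‖ ^ 2 ≤ a v v)
    {f₁ f₂ : E →L[ℝ] ℝ} {u₁ u₂ : E} (h₁ : IsVISolution a f₁ K u₁)
    (h₂ : IsVISolution a f₂ K u₂) : ‖u₁ - u₂‖ ≤ 1 / α * ‖f₁ - f₂‖ := by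
  have h₁₂ := h₁.2 u₂ h₂.1
  have h₂₁ := h₂.2 u₁ h₁.1
  have hdual : (f₁ - f₂) (u₁ - u₂) ≤ ‖f₁ - f₂‖ * ‖u₁ - u₂‖ :=
    (le_abs_self _).trans ((f₁ - f₂).le_opNorm _)
  have hsq : α * ‖u₁ - u₂‖ ^ 2 ≤ ‖f₁ - f₂‖ * ‖u₁ - u₂‖ := by
    have hc := hcoer (u₁ - u₂)
    rw [← neg_sub u₁ u₂] at h₁₂
    simp only [map_sub, map_neg, sub_apply] at h₁₂ h₂₁ hc hdual
    linarith
  rw [one_div_mul_eq_div, le_div_iff₀' hα]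
  rcases (norm_nonneg (u₁ - u₂)).eq_or_lt with h0 | h0
  · rw [← h0, mul_zero]
    exact norm_nonneg _
  · nlinarith

theorem IsVISolution.unique (hα : 0 < α) (hcoer : ∀ v, α * ‖v‖ ^ 2 ≤ a v v)
    {f : E →L[ℝ] ℝ} {u₁ u₂ : E} (h₁ : IsVISolution a f K u₁) (h₂ : IsVISolution a f K u₂) :
    u₁ = u₂ := by
  have := h₁.norm_sub_le hα hcoer h₂
  rwa [sub_self, norm_zero, mul_zero, norm_le_zero_iff, sub_eq_zero] at this

end Stability

section Existence

variable {V : Type*} [NormedAddCommGroup V] [InnerProductSpace ℝ V]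

theorem exists_proj_inner_le_zero [CompleteSpace V] {K : Set V} (hne : K.Nonempty)
    (hcl : IsClosed K) (hcv : Convex ℝ K) :
    ∃ P : V → V, ∀ x, P x ∈ K ∧ ∀ w ∈ K, ⟪x - P x, w - P x⟫_ℝ ≤ 0 := by
  have hproj : ∀ x, ∃ p ∈ K, ∀ w ∈ K, ⟪x - p, w - p⟫_ℝ ≤ 0 := fun x => by
    obtain ⟨p, hpK, hmin⟩ := exists_norm_eq_iInf_of_complete_convex hne hcl.isComplete hcv x
    exact ⟨p, hpK, (norm_eq_iInf_iff_real_inner_le_zero hcv hpK).1 hmin⟩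
  choose P hPK hP using hproj
  exact ⟨P, fun x => ⟨hPK x, hP x⟩⟩

theorem norm_sub_le_of_inner_le_zero {x y p q : V} (hp : ⟪x - p, q - p⟫_ℝ ≤ 0)
    (hq : ⟪y - q, p - q⟫_ℝ ≤ 0) : ‖p - q‖ ≤ ‖x - y‖ := by
  have hmono : ‖p - q‖ * ‖p - q‖ ≤ ‖x - y‖ * ‖p - q‖ :=
    calc ‖p - q‖ * ‖p - q‖ = ⟪p - q, p - q⟫_ℝ := (real_inner_self_eq_norm_mul_norm _).symm
      _ ≤ ⟪x - y, p - q⟫_ℝ := by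
        rw [← neg_sub p q, inner_neg_right] at hp
        have hsplit : x - y = (x - p) - (y - q) + (p - q) := by abel
        rw [hsplit, inner_add_left, inner_sub_left (x - p)]
        linarith
      _ ≤ ‖x - y‖ * ‖p - q‖ := real_inner_le_norm _ _
  rcases (norm_nonneg (p - q)).eq_or_lt with h0 | h0
  · rw [← h0]
    exact norm_nonneg _
  · exact le_of_mul_le_mul_right hmono h0

theorem lipschitzWith_one_of_inner_le_zero {K : Set V} {P : V → V}
    (hP : ∀ x, P x ∈ K ∧ ∀ w ∈ K, ⟪x - P x, w - P x⟫_ℝ ≤ 0) : LipschitzWith 1 P :=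
  LipschitzWith.of_dist_le_mul fun x y => by
    simpa only [dist_eq_norm, NNReal.coe_one, one_mul] using
      norm_sub_le_of_inner_le_zero ((hP x).2 _ (hP y).1) ((hP y).2 _ (hP x).1)

variable [CompleteSpace V] {a : V →L[ℝ] V →L[ℝ] ℝ} {α ρ : ℝ}

theorem norm_continuousLinearMapOfBilin_apply_le (a : V →L[ℝ] V →L[ℝ] ℝ) (v : V) :
    ‖continuousLinearMapOfBilin a v‖ ≤ ‖a‖ * ‖v‖ := by
  simpa [continuousLinearMapOfBilin] using a.le_opNorm v

theorem norm_sub_smul_continuousLinearMapOfBilin_sq_le (hρ : 0 ≤ ρ)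
    (hcoer : ∀ v, α * ‖v‖ ^ 2 ≤ a v v) (v : V) :
    ‖v - ρ • continuousLinearMapOfBilin a v‖ ^ 2 ≤ (1 - ρ * (2 * α - ρ * ‖a‖ ^ 2)) * ‖v‖ ^ 2 := by
  have hexpand : ‖v - ρ • continuousLinearMapOfBilin a v‖ ^ 2
      = ‖v‖ ^ 2 - 2 * (ρ * a v v) + ρ ^ 2 * ‖continuousLinearMapOfBilin a v‖ ^ 2 := by
    rw [norm_sub_sq_real, real_inner_smul_right, norm_smul, Real.norm_of_nonneg hρ, mul_pow,
      real_inner_comm, continuousLinearMapOfBilin_apply]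
  have hA : ρ ^ 2 * ‖continuousLinearMapOfBilin a v‖ ^ 2 ≤ ρ ^ 2 * (‖a‖ * ‖v‖) ^ 2 := by
    gcongr
    exact norm_continuousLinearMapOfBilin_apply_le a v
  nlinarith [hcoer v]

theorem lipschitzWith_sub_smul_continuousLinearMapOfBilin (hρ : 0 ≤ ρ)
    (hcoer : ∀ v, α * ‖v‖ ^ 2 ≤ a v v) (F : V) {k : ℝ≥0}
    (hk : 1 - ρ * (2 * α - ρ * ‖a‖ ^ 2) ≤ (k : ℝ) ^ 2) :
    LipschitzWith k fun v => v - ρ • (continuousLinearMapOfBilin a v - F) :=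
  LipschitzWith.of_dist_le_mul fun x y => by
    have hdiff : (x - ρ • (continuousLinearMapOfBilin a x - F))
        - (y - ρ • (continuousLinearMapOfBilin a y - F))
        = (x - y) - ρ • continuousLinearMapOfBilin a (x - y) := by
      rw [map_sub, smul_sub, smul_sub, smul_sub]
      abel
    rw [dist_eq_norm, dist_eq_norm, hdiff]
    refine (pow_le_pow_iff_left₀ (norm_nonneg _) (by positivity) two_ne_zero).1 ?_
    calc _ ≤ (1 - ρ * (2 * α - ρ * ‖a‖ ^ 2)) * ‖x - y‖ ^ 2 :=
          norm_sub_smul_continuousLinearMapOfBilin_sq_le hρ hcoer _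
      _ ≤ (k : ℝ) ^ 2 * ‖x - y‖ ^ 2 := by gcongr
      _ = ((k : ℝ) * ‖x - y‖) ^ 2 := by ring

theorem isVISolution_of_proj_eq {K : Set V} {P : V → V}
    (hP : ∀ x, P x ∈ K ∧ ∀ w ∈ K, ⟪x - P x, w - P x⟫_ℝ ≤ 0) (hρ : 0 < ρ) {f : V →L[ℝ] ℝ}
    {u : V} (hu : P (u - ρ • (continuousLinearMapOfBilin a u - (toDual ℝ V).symm f)) = u) :
    IsVISolution a f K u := by
  set x := u - ρ • (continuousLinearMapOfBilin a u - (toDual ℝ V).symm f) with hx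
  refine ⟨hu ▸ (hP x).1, fun v hv => ?_⟩
  have h := (hP x).2 v hv
  rw [hu, hx, sub_sub_cancel_left, inner_neg_left, real_inner_smul_left, inner_sub_left,
    continuousLinearMapOfBilin_apply, toDual_symm_apply] at h
  nlinarith

theorem exists_isVISolution (hα : 0 < α) (hcoer : ∀ v, α * ‖v‖ ^ 2 ≤ a v v) {K : Set V}
    (hne : K.Nonempty) (hcl : IsClosed K) (hcv : Convex ℝ K) (f : V →L[ℝ] ℝ) :
    ∃ u, IsVISolution a f K u := by
  obtain ⟨P, hP⟩ := exists_proj_inner_le_zero hne hcl hcv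
  -- any `0 < ρ < 2α / ‖a‖²` gives a contraction; the `+ 1` keeps this choice valid when `a = 0`
  set ρ := α / (‖a‖ ^ 2 + 1)
  have hρ : 0 < ρ := by positivity
  set c := 1 - ρ * (2 * α - ρ * ‖a‖ ^ 2)
  have hc : c < 1 := by
    have hρa : ρ * ‖a‖ ^ 2 < α := by
      rw [div_mul_eq_mul_div, div_lt_iff₀ (by positivity)]
      nlinarith
    nlinarith
  set k := NNReal.sqrt c.toNNReal
  have hk : c ≤ (k : ℝ) ^ 2 := by
    rw [Real.coe_sqrt, Real.sq_sqrt (NNReal.coe_nonneg _)]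
    exact Real.le_coe_toNNReal c
  have hk1 : k < 1 := by
    simpa using NNReal.sqrt_lt_sqrt.2 (Real.toNNReal_lt_one.2 hc)
  have hT := ((lipschitzWith_one_of_inner_le_zero hP).comp
    (lipschitzWith_sub_smul_continuousLinearMapOfBilin hρ.le hcoer ((toDual ℝ V).symm f) hk))
  rw [one_mul] at hT
  have hcontr : ContractingWith k _ := ⟨hk1, hT⟩
  exact ⟨_, isVISolution_of_proj_eq hP hρ hcontr.fixedPoint_isFixedPt⟩

end Existence

/-- Lions–Stampacchia: existence, uniqueness, and Lipschitz continuity of the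
solution map for a variational inequality of the first kind. -/
theorem stmt_0 {V : Type*} [NormedAddCommGroup V] [InnerProductSpace ℝ V] [CompleteSpace V]
    (a : V →L[ℝ] V →L[ℝ] ℝ) (α : ℝ) (hα : 0 < α)
    (hcoer : ∀ v : V, α * ‖v‖ ^ 2 ≤ a v v)
    (K : Set V) (hKne : K.Nonempty) (hKcl : IsClosed K) (hKcv : Convex ℝ K) :
    (∀ f : V →L[ℝ] ℝ, ∃! u : V, u ∈ K ∧ ∀ v ∈ K, f (v - u) ≤ a u (v - u)) ∧
    (∀ f₁ f₂ : V →L[ℝ] ℝ, ∀ u₁ u₂ : V,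
      u₁ ∈ K → (∀ v ∈ K, f₁ (v - u₁) ≤ a u₁ (v - u₁)) →
      u₂ ∈ K → (∀ v ∈ K, f₂ (v - u₂) ≤ a u₂ (v - u₂)) →
      ‖u₁ - u₂‖ ≤ (1 / α) * ‖f₁ - f₂‖) := by
  refine ⟨fun f => ?_, fun f₁ f₂ u₁ u₂ hu₁ hv₁ hu₂ hv₂ =>
    IsVISolution.norm_sub_le hα hcoer ⟨hu₁, hv₁⟩ ⟨hu₂, hv₂⟩⟩
  obtain ⟨u, hu⟩ := exists_isVISolution hα hcoer hKne hKcl hKcv f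
  exact ⟨u, hu, fun y hy => IsVISolution.unique hα hcoer hy hu⟩
end

section
/- Suppose the inf-sup constant satisfies β := inf_{q≠0} sup_{v≠0} b(v,q)/(‖q‖_Q‖v‖_V) ≥ β₀ > 0 for some β₀ > 0, and K is nonempty. Then the mixed problem — find (u, λ) ∈ V × M such that a(u,v) + b(v,λ) = f(v) for all v ∈ V and b(u, q − λ) ≤ g(q − λ) for all q ∈ M — has a unique solution. Furthermore, if (u, λ) solves this mixed problem, then u solves the variational inequality: u ∈ K and a(u, v − u) ≥ f(v − u) for all v ∈ K. -/
/-!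
Uniqueness: testing each complementarity condition with the other multiplier gives
`b(u₁ - u₂, λ₁ - λ₂) ≥ 0`, so coercivity forces `u₁ = u₂`; then `b(·, λ₁ - λ₂) = 0`, and the
inf-sup condition forces `λ₁ = λ₂`.

Existence: `K` is closed and convex, so by the Lions–Stampacchia theorem (Banach's fixed point
theorem for `w ↦ P_K (w - ρ (A w - F))`, with `A`, `F` the Riesz representatives of `a`, `f` and
`ρ` small) the variational inequality has a solution `u`. Then `ℓ = f - a(u, ·)` attains its
maximum over `K` at `u`. The inf-sup condition makes the cone `{(b(·, q), t) | q ∈ M, g q ≤ t}`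
closed in `V' × ℝ`, and separating `(ℓ, ℓ u)` from it would produce a point of `K` where `ℓ` is
larger. Hence `ℓ = b(·, λ)` with `λ ∈ M` and `g λ ≤ ℓ u = b(u, λ)`, which together with `u ∈ K` is
the complementarity condition.

Conversely, complementarity tested with `q = 0` and `q = λ + q'` gives `b(u, λ) = g λ` and `u ∈ K`,
from which the variational inequality follows.
-/

open scoped RealInnerProductSpace NNReal
open InnerProductSpace

def IsVariationalSolution {E : Type*} [NormedAddCommGroup E] [NormedSpace ℝ E]
    (a : E →L[ℝ] E →L[ℝ] ℝ) (f : E →L[ℝ] ℝ) (K : Set E) (u : E) : Prop :=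
  u ∈ K ∧ ∀ v ∈ K, f (v - u) ≤ a u (v - u)

section VariationalInequality

variable {E : Type*} [NormedAddCommGroup E] [InnerProductSpace ℝ E]

theorem norm_sub_le_of_inner_le_zero_s2 {x y p p' : E} (hp : ⟪x - p, p' - p⟫ ≤ 0)
    (hp' : ⟪y - p', p - p'⟫ ≤ 0) : ‖p - p'‖ ≤ ‖x - y‖ := by
  have key : ‖p - p'‖ ^ 2 ≤ ⟪x - y, p - p'⟫ := by
    have hsplit : ⟪x - y, p - p'⟫ - ‖p - p'‖ ^ 2 = -⟪x - p, p' - p⟫ - ⟪y - p', p - p'⟫ := by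
      rw [← real_inner_self_eq_norm_sq, ← inner_sub_left, ← neg_sub p p', inner_neg_right,
        neg_neg, ← inner_sub_left]
      congr 1
      abel
    linarith
  have := key.trans (real_inner_le_norm _ _)
  nlinarith [norm_nonneg (p - p'), norm_nonneg (x - y)]

theorem exists_lipschitzWith_one_proj [CompleteSpace E] {K : Set E} (hne : K.Nonempty)
    (hcl : IsClosed K) (hcv : Convex ℝ K) :
    ∃ P : E → E, (∀ x, P x ∈ K) ∧ (∀ x, ∀ w ∈ K, ⟪x - P x, w - P x⟫ ≤ 0) ∧ LipschitzWith 1 P := by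
  have hproj : ∀ x, ∃ p ∈ K, ∀ w ∈ K, ⟪x - p, w - p⟫ ≤ 0 := fun x ↦ by
    obtain ⟨p, hp, hmin⟩ := exists_norm_eq_iInf_of_complete_convex hne hcl.isComplete hcv x
    exact ⟨p, hp, (norm_eq_iInf_iff_real_inner_le_zero hcv hp).1 hmin⟩
  choose P hPK hPvi using hproj
  refine ⟨P, hPK, hPvi, LipschitzWith.of_dist_le_mul fun x y ↦ ?_⟩
  rw [NNReal.coe_one, one_mul, dist_eq_norm, dist_eq_norm]
  exact norm_sub_le_of_inner_le_zero_s2 (hPvi x _ (hPK y)) (hPvi y _ (hPK x))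

theorem exists_norm_sub_smul_le_of_coercive {A : E →L[ℝ] E} {α : ℝ} (hα : 0 < α)
    (hA : ∀ v, α * ‖v‖ * ‖v‖ ≤ ⟪A v, v⟫) :
    ∃ ρ : ℝ, 0 < ρ ∧ ∃ c : ℝ≥0, c < 1 ∧ ∀ v, ‖v - ρ • A v‖ ≤ c * ‖v‖ := by
  set ρ := α / (‖A‖ ^ 2 + α ^ 2)
  have hρ : 0 < ρ := by positivity
  -- `ρ ‖A‖² ≤ α` makes the quadratic term `ρ² ‖A v‖²` cost at most half the gain `2ρ⟪A v, v⟫`.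
  have hρA : ρ * ‖A‖ ^ 2 ≤ α := by
    rw [div_mul_eq_mul_div, div_le_iff₀ (by positivity)]
    nlinarith [sq_nonneg α]
  have hρα : ρ * α ≤ 1 := by
    rw [div_mul_eq_mul_div, div_le_one (by positivity)]
    nlinarith [sq_nonneg ‖A‖]
  refine ⟨ρ, hρ, Real.toNNReal √(1 - ρ * α), ?_, fun v ↦ ?_⟩
  · rw [Real.toNNReal_lt_one, Real.sqrt_lt' one_pos]
    nlinarith
  · have hAv : ‖A v‖ ≤ ‖A‖ * ‖v‖ := A.le_opNorm v
    have hsq : ‖v - ρ • A v‖ ^ 2 ≤ (1 - ρ * α) * ‖v‖ ^ 2 := by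
      rw [norm_sub_sq_real, norm_smul, real_inner_smul_right, real_inner_comm,
        Real.norm_of_nonneg hρ.le]
      have hquad : (ρ * ‖A v‖) ^ 2 ≤ ρ * α * ‖v‖ ^ 2 := calc
        (ρ * ‖A v‖) ^ 2 ≤ (ρ * (‖A‖ * ‖v‖)) ^ 2 := by gcongr
        _ = ρ * (ρ * ‖A‖ ^ 2) * ‖v‖ ^ 2 := by ring
        _ ≤ ρ * α * ‖v‖ ^ 2 := by gcongr
      have hlin : ρ * (α * ‖v‖ * ‖v‖) ≤ ρ * ⟪A v, v⟫ := by gcongr; exact hA v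
      nlinarith
    rw [Real.coe_toNNReal _ (Real.sqrt_nonneg _), ← Real.sqrt_sq (norm_nonneg v),
      ← Real.sqrt_mul (by linarith)]
    exact Real.le_sqrt_of_sq_le hsq

theorem IsCoercive.exists_isVariationalSolution {E : Type*} [NormedAddCommGroup E]
    [InnerProductSpace ℝ E] [CompleteSpace E] {a : E →L[ℝ] E →L[ℝ] ℝ} (ha : IsCoercive a)
    (f : E →L[ℝ] ℝ) {K : Set E} (hne : K.Nonempty) (hcl : IsClosed K) (hcv : Convex ℝ K) :
    ∃ u, IsVariationalSolution a f K u := by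
  obtain ⟨α, hα, hcoer⟩ := ha
  set A := continuousLinearMapOfBilin a
  set F := (toDual ℝ E).symm f
  have hA : ∀ v, α * ‖v‖ * ‖v‖ ≤ ⟪A v, v⟫ := fun v ↦ by
    rw [continuousLinearMapOfBilin_apply]; exact hcoer v
  obtain ⟨ρ, hρ, c, hc, hcontr⟩ := exists_norm_sub_smul_le_of_coercive hα hA
  obtain ⟨P, hPK, hPvi, hPlip⟩ := exists_lipschitzWith_one_proj hne hcl hcv
  -- A fixed point of `T` solves the inequality by the variational characterization of `P`;
  -- `T` contracts on all of `E`, so it need not be restricted to `K`.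
  set T : E → E := fun w ↦ P (w - ρ • (A w - F))
  have hT : ContractingWith c T := by
    refine ⟨hc, LipschitzWith.of_dist_le_mul fun w w' ↦ ?_⟩
    calc dist (T w) (T w') ≤ dist (w - ρ • (A w - F)) (w' - ρ • (A w' - F)) := by
          simpa using hPlip.dist_le_mul (w - ρ • (A w - F)) (w' - ρ • (A w' - F))
      _ = ‖(w - w') - ρ • A (w - w')‖ := by
          rw [dist_eq_norm, map_sub, smul_sub, smul_sub, smul_sub]; congr 1; abel
      _ ≤ c * dist w w' := by rw [dist_eq_norm]; exact hcontr _
  set u := ContractingWith.fixedPoint T hT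
  have hu : P (u - ρ • (A u - F)) = u := hT.fixedPoint_isFixedPt
  refine ⟨u, hu ▸ hPK _, fun v hv ↦ ?_⟩
  have hproj := hPvi (u - ρ • (A u - F)) v hv
  rw [hu, sub_sub_cancel_left, inner_neg_left, real_inner_smul_left, neg_nonpos] at hproj
  have hgap : 0 ≤ ⟪A u - F, v - u⟫ := nonneg_of_mul_nonneg_right hproj hρ
  rw [inner_sub_left, continuousLinearMapOfBilin_apply, toDual_symm_apply] at hgap
  linarith

end VariationalInequality

def Convex.toPointedCone {Q : Type*} [AddCommGroup Q] [Module ℝ Q] {M : Set Q} (hcv : Convex ℝ M)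
    (hne : M.Nonempty) (hsmul : ∀ c : ℝ, 0 ≤ c → ∀ q ∈ M, c • q ∈ M) : PointedCone ℝ Q where
  carrier := M
  zero_mem' := by
    obtain ⟨q, hq⟩ := hne
    simpa using hsmul 0 le_rfl q hq
  add_mem' {q₁ q₂} h₁ h₂ := by
    -- `q₁ + q₂` is twice the midpoint
    have hmid := hcv h₁ h₂ (by norm_num : (0 : ℝ) ≤ 1 / 2) (by norm_num : (0 : ℝ) ≤ 1 / 2)
      (by norm_num)
    simpa [smul_add, smul_smul] using hsmul 2 zero_le_two _ hmid
  smul_mem' c _ hq := hsmul c c.2 _ hq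

section MixedProblem

variable {V Q : Type*} [NormedAddCommGroup V] [NormedSpace ℝ V] [NormedAddCommGroup Q]
  [NormedSpace ℝ Q] {a : V →L[ℝ] V →L[ℝ] ℝ} {b : V →L[ℝ] Q →L[ℝ] ℝ} {f : V →L[ℝ] ℝ}
  {g : Q →L[ℝ] ℝ}

def constraintSet (b : V →L[ℝ] Q →L[ℝ] ℝ) (g : Q →L[ℝ] ℝ) (M : Set Q) : Set V :=
  {v | ∀ q ∈ M, b v q ≤ g q}

theorem isClosed_constraintSet (b : V →L[ℝ] Q →L[ℝ] ℝ) (g : Q →L[ℝ] ℝ) (M : Set Q) :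
    IsClosed (constraintSet b g M) := by
  simp only [constraintSet, Set.ofPred_forall]
  exact isClosed_iInter fun q ↦ isClosed_iInter fun _ ↦
    isClosed_le (b.flip q).continuous continuous_const

theorem convex_constraintSet (b : V →L[ℝ] Q →L[ℝ] ℝ) (g : Q →L[ℝ] ℝ) (M : Set Q) :
    Convex ℝ (constraintSet b g M) := by
  simp only [constraintSet, Set.ofPred_forall]
  exact convex_iInter fun q ↦ convex_iInter fun _ ↦ convex_halfSpace_le (b.flip q).isLinear _

def IsMixedSolution (a : V →L[ℝ] V →L[ℝ] ℝ) (b : V →L[ℝ] Q →L[ℝ] ℝ) (f : V →L[ℝ] ℝ)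
    (g : Q →L[ℝ] ℝ) (M : Set Q) (u : V) (lam : Q) : Prop :=
  lam ∈ M ∧ (∀ v, a u v + b v lam = f v) ∧ ∀ q ∈ M, b u (q - lam) ≤ g (q - lam)

theorem IsMixedSolution.isVariationalSolution {M : PointedCone ℝ Q} {u : V} {lam : Q}
    (h : IsMixedSolution a b f g M u lam) : IsVariationalSolution a f (constraintSet b g M) u := by
  obtain ⟨hlam, heq, hcompl⟩ := h
  have hlam_le : g lam ≤ b u lam := by
    simpa using hcompl 0 M.zero_mem
  refine ⟨fun q hq ↦ by simpa using hcompl (lam + q) (M.add_mem hlam hq), fun v hv ↦ ?_⟩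
  have hv_lam : b v lam ≤ g lam := hv lam hlam
  have := heq (v - u)
  simp only [map_sub, sub_apply] at this ⊢
  linarith

theorem IsMixedSolution.unique {M : Set Q} (ha : IsCoercive a) (hb : Function.Injective b.flip)
    {u₁ u₂ : V} {l₁ l₂ : Q} (h₁ : IsMixedSolution a b f g M u₁ l₁)
    (h₂ : IsMixedSolution a b f g M u₂ l₂) : u₁ = u₂ ∧ l₁ = l₂ := by
  obtain ⟨hl₁, heq₁, hcompl₁⟩ := h₁
  obtain ⟨hl₂, heq₂, hcompl₂⟩ := h₂
  have hdiff : ∀ v, a (u₁ - u₂) v + b v (l₁ - l₂) = 0 := fun v ↦ by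
    simp only [map_sub, sub_apply]
    linarith [heq₁ v, heq₂ v]
  have hcross : 0 ≤ b (u₁ - u₂) (l₁ - l₂) := by
    have h₁₂ := hcompl₁ l₂ hl₂
    have h₂₁ := hcompl₂ l₁ hl₁
    simp only [map_sub, sub_apply] at h₁₂ h₂₁ ⊢
    linarith
  have hu : u₁ = u₂ := by
    obtain ⟨C, hC, hcoer⟩ := ha
    have hnonpos : C * ‖u₁ - u₂‖ * ‖u₁ - u₂‖ ≤ 0 :=
      (hcoer _).trans (by linarith [hdiff (u₁ - u₂)])
    have : ‖u₁ - u₂‖ ≤ 0 := by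
      by_contra! hpos
      exact hnonpos.not_gt (by positivity)
    exact sub_eq_zero.1 (norm_le_zero_iff.1 this)
  refine ⟨hu, sub_eq_zero.1 (hb.eq_iff' (map_zero _) |>.1 ?_)⟩
  ext v
  simpa [hu] using hdiff v

def multiplierCone (b : V →L[ℝ] Q →L[ℝ] ℝ) (g : Q →L[ℝ] ℝ) (M : PointedCone ℝ Q) :
    PointedCone ℝ ((V →L[ℝ] ℝ) × ℝ) where
  carrier := Prod.map b.flip id '' {p | p.1 ∈ M ∧ g p.1 ≤ p.2}
  zero_mem' := ⟨0, ⟨M.zero_mem, by simp⟩, Prod.ext (map_zero _) rfl⟩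
  add_mem' := by
    rintro _ _ ⟨⟨q₁, t₁⟩, ⟨hq₁, ht₁⟩, rfl⟩ ⟨⟨q₂, t₂⟩, ⟨hq₂, ht₂⟩, rfl⟩
    refine ⟨(q₁ + q₂, t₁ + t₂), ⟨M.add_mem hq₁ hq₂, ?_⟩, by simp [Prod.map]⟩
    show g (q₁ + q₂) ≤ t₁ + t₂
    rw [map_add]
    linarith
  smul_mem' := by
    rintro c _ ⟨⟨q, t⟩, ⟨hq, ht⟩, rfl⟩
    refine ⟨c • (q, t), ⟨Submodule.smul_mem M c hq, ?_⟩, by simp⟩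
    show g ((c : ℝ) • q) ≤ (c : ℝ) * t
    rw [map_smul, smul_eq_mul]
    exact mul_le_mul_of_nonneg_left ht c.2

theorem isClosed_multiplierCone [CompleteSpace Q] {M : PointedCone ℝ Q}
    (hM : IsClosed (M : Set Q)) {K : ℝ≥0} (hb : AntilipschitzWith K b.flip) :
    IsClosed (multiplierCone b g M : Set ((V →L[ℝ] ℝ) × ℝ)) :=
  ((hb.isClosedEmbedding b.flip.uniformContinuous).prodMap .id).isClosedMap _ <|
    (hM.preimage continuous_fst).inter
      (isClosed_le (g.continuous.comp continuous_fst) continuous_snd)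

end MixedProblem

section Multiplier

variable {V Q : Type*} [NormedAddCommGroup V] [InnerProductSpace ℝ V] [CompleteSpace V]
  [NormedAddCommGroup Q] [NormedSpace ℝ Q] [CompleteSpace Q] {b : V →L[ℝ] Q →L[ℝ] ℝ}
  {g : Q →L[ℝ] ℝ} {M : PointedCone ℝ Q}

theorem InnerProductSpace.inclusionInDoubleDual_surjective :
    Function.Surjective (NormedSpace.inclusionInDoubleDual ℝ V) := fun Φ ↦ by
  refine ⟨(toDual ℝ V).symm
    (Φ.comp (toDual ℝ V).toContinuousLinearEquiv.toContinuousLinearMap), ?_⟩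
  ext ψ
  rw [NormedSpace.dual_def, ← toDual_symm_apply, real_inner_comm, toDual_symm_apply]
  simp

theorem exists_mem_flip_eq_of_forall_le (hM : IsClosed (M : Set Q)) {K : ℝ≥0}
    (hb : AntilipschitzWith K b.flip) {ℓ : V →L[ℝ] ℝ} {u : V} (hu : u ∈ constraintSet b g M)
    (hmax : ∀ v ∈ constraintSet b g M, ℓ v ≤ ℓ u) :
    ∃ lam ∈ M, b.flip lam = ℓ ∧ g lam ≤ ℓ u := by
  by_contra! hnot
  have hout : (ℓ, ℓ u) ∉ multiplierCone b g M := by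
    rintro ⟨⟨q, t⟩, ⟨hq, ht⟩, hqt⟩
    obtain ⟨hqℓ, rfl⟩ := Prod.ext_iff.1 hqt
    exact (hnot q hq hqℓ).not_ge ht
  obtain ⟨Φ, hΦC, hΦx⟩ :=
    ProperCone.hyperplane_separation_point ⟨_, isClosed_multiplierCone hM hb⟩ hout
  obtain ⟨w, hw⟩ := inclusionInDoubleDual_surjective (Φ.comp (.inl ℝ _ ℝ))
  set σ := Φ (0, 1)
  have hΦ : ∀ ψ t, Φ (ψ, t) = ψ w + t * σ := fun ψ t ↦ by
    rw [← NormedSpace.dual_def ℝ V w, hw, ← smul_eq_mul, ← map_smul,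
      ContinuousLinearMap.comp_apply, ← map_add]
    simp
  have hσ : 0 ≤ σ := by
    simpa [hΦ] using hΦC (0, 1) ⟨(0, 1), ⟨M.zero_mem, by simp⟩, Prod.ext (map_zero _) rfl⟩
  have hwq : ∀ q ∈ M, 0 ≤ b w q + g q * σ := fun q hq ↦ by
    simpa [hΦ] using hΦC (b.flip q, g q) ⟨(q, g q), ⟨hq, le_rfl⟩, rfl⟩
  rw [hΦ] at hΦx
  -- `Φ ≥ 0` on the cone says `b(-w, ·) ≤ σ g` on `M`, so `(u - w) / (1 + σ)` lies in `K`,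
  -- and `Φ (ℓ, ℓ u) < 0` says `ℓ` is larger there than at `u`.
  set v := (1 + σ)⁻¹ • (u - w)
  have hvK : v ∈ constraintSet b g M := fun q hq ↦ by
    have := hu q hq
    have := hwq q hq
    simp only [v, map_smul, map_sub, smul_eq_mul, smul_apply, sub_apply,
      inv_mul_le_iff₀ (by linarith : (0 : ℝ) < 1 + σ)]
    linarith
  have hv : ℓ u < ℓ v := by
    simp only [v, map_smul, map_sub, smul_eq_mul, lt_inv_mul_iff₀ (by linarith : (0 : ℝ) < 1 + σ)]
    linarith
  exact (hmax v hvK).not_gt hv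

theorem IsVariationalSolution.exists_isMixedSolution {a : V →L[ℝ] V →L[ℝ] ℝ} {f : V →L[ℝ] ℝ}
    (hM : IsClosed (M : Set Q)) {K : ℝ≥0} (hb : AntilipschitzWith K b.flip) {u : V}
    (hu : IsVariationalSolution a f (constraintSet b g M) u) :
    ∃ lam, IsMixedSolution a b f g M u lam := by
  obtain ⟨huK, hvi⟩ := hu
  obtain ⟨lam, hlam, hrep, hglam⟩ :=
    exists_mem_flip_eq_of_forall_le (ℓ := f - a u) hM hb huK fun v hv ↦ by
      have := hvi v hv
      simp only [sub_apply, map_sub] at this ⊢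
      linarith
  have heq : ∀ v, a u v + b v lam = f v := fun v ↦ by
    have := congrArg (· v) hrep
    simp only [ContinuousLinearMap.flip_apply, sub_apply] at this
    linarith
  refine ⟨lam, hlam, heq, fun q hq ↦ ?_⟩
  have := huK q hq
  simp only [sub_apply] at hglam
  simp only [map_sub]
  linarith [heq u]

end Multiplier

/-- Brezzi–Hager–Raviart: under an inf-sup condition the mixed formulation of the
variational inequality has a unique solution, and its first component solves the
original variational inequality on `K = {v | b(v,q) ≤ g(q) ∀ q ∈ M}`. -/
theorem stmt_2 {V Q : Type*}
    [NormedAddCommGroup V] [InnerProductSpace ℝ V] [CompleteSpace V]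
    [NormedAddCommGroup Q] [InnerProductSpace ℝ Q] [CompleteSpace Q]
    (a : V →L[ℝ] V →L[ℝ] ℝ) (α : ℝ) (hα : 0 < α)
    (hcoer : ∀ v : V, α * ‖v‖ ^ 2 ≤ a v v)
    (b : V →L[ℝ] Q →L[ℝ] ℝ) (f : V →L[ℝ] ℝ) (g : Q →L[ℝ] ℝ)
    (M : Set Q) (hMne : M.Nonempty) (hMcl : IsClosed M) (hMcv : Convex ℝ M)
    (hMcone : ∀ c : ℝ, 0 ≤ c → ∀ q ∈ M, c • q ∈ M)
    (β₀ : ℝ) (hβ₀ : 0 < β₀)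
    (hinfsup : ∀ q : Q, β₀ * ‖q‖ ≤ ‖b.flip q‖)
    (hKne : {v : V | ∀ q ∈ M, b v q ≤ g q}.Nonempty) :
    (∃! p : V × Q, p.2 ∈ M ∧ (∀ v : V, a p.1 v + b v p.2 = f v) ∧
        (∀ q ∈ M, b p.1 (q - p.2) ≤ g (q - p.2))) ∧
    (∀ u : V, ∀ lam : Q, lam ∈ M →
      (∀ v : V, a u v + b v lam = f v) →
      (∀ q ∈ M, b u (q - lam) ≤ g (q - lam)) →
      (∀ q ∈ M, b u q ≤ g q) ∧
      ∀ v : V, (∀ q ∈ M, b v q ≤ g q) → f (v - u) ≤ a u (v - u)) := by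
  set Mc := hMcv.toPointedCone hMne hMcone
  have ha : IsCoercive a := ⟨α, hα, fun v ↦ by rw [mul_assoc, ← sq]; exact hcoer v⟩
  have hb : AntilipschitzWith (β₀⁻¹).toNNReal b.flip := b.flip.antilipschitz_of_bound fun q ↦ by
    rw [Real.coe_toNNReal _ (inv_nonneg.2 hβ₀.le), le_inv_mul_iff₀ hβ₀]
    exact hinfsup q
  obtain ⟨u₀, hu₀⟩ := ha.exists_isVariationalSolution f hKne (isClosed_constraintSet b g M)
    (convex_constraintSet b g M)
  obtain ⟨lam₀, hlam₀⟩ := hu₀.exists_isMixedSolution (M := Mc) hMcl hb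
  refine ⟨⟨(u₀, lam₀), hlam₀, fun p hp ↦ ?_⟩, fun u lam hlam heq hcompl ↦
    IsMixedSolution.isVariationalSolution (M := Mc) ⟨hlam, heq, hcompl⟩⟩
  obtain ⟨hu, hlam⟩ := IsMixedSolution.unique ha hb.injective hp hlam₀
  exact Prod.ext hu hlam
end

section
/- Suppose the inf-sup constant β := inf_{q≠0} sup_{v≠0} b(v,q)/(‖q‖_Q‖v‖_V) ≥ β₀ > 0 and K is nonempty. Then the generalized Karush–Kuhn–Tucker system — find (u, λ) ∈ V × Q with: a(u,v) + b(v,λ) = f(v) for all v ∈ V; g(q) − b(u,q) ≥ 0 for all q ∈ M; λ ∈ M; and g(λ) − b(u,λ) = 0 — has a unique solution. Moreover, a pair (u, λ) ∈ V × M solves the mixed problem (a(u,v) + b(v,λ) = f(v) for all v ∈ V and b(u, q − λ) ≤ g(q − λ) for all q ∈ M) if and only if it solves the KKT system. -/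
/-!
Stampacchia: composing the projection onto the feasible set `K` with a gradient step
`x ↦ x - ρ (A x - F)` gives a contraction, whose fixed point `u` solves the variational inequality
`f (w - u) ≤ a u (w - u)` on `K`. Testing with `w = u - y`, where `b y ≥ 0` on `M`, shows that
`f - a u` lies in the bipolar of the cone `{b (·) μ | μ ∈ M}`. The inf-sup condition makes
`μ ↦ b (·) μ` bounded below, so this cone is closed and Farkas' lemma gives `λ ∈ M` with
`a u + b (·) λ = f`. The inf-sup condition also makes `v ↦ b v` onto (Lax–Milgram), so some
`v₀ ∈ K` has `b v₀ = g`, and testing with `w = v₀` gives `g λ = b u λ`. Uniqueness of `u` follows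
from coercivity, that of `λ` from the inf-sup condition again.
-/

open scoped RealInnerProductSpace NNReal

section Hilbert

variable {V : Type*} [NormedAddCommGroup V] [InnerProductSpace ℝ V]

theorem exists_contraction_sub_smul (A : V →L[ℝ] V) {α : ℝ} (hα : 0 < α)
    (hA : ∀ z, α * ‖z‖ ^ 2 ≤ ⟪A z, z⟫) :
    ∃ ρ : ℝ, 0 < ρ ∧ ∃ k : ℝ≥0, k < 1 ∧ ∀ z, ‖z - ρ • A z‖ ≤ k * ‖z‖ := by
  obtain ⟨γ, hαγ, hAγ⟩ : ∃ γ, α < γ ∧ ‖A‖ < γ := by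
    simpa only [max_lt_iff] using exists_gt (max α ‖A‖)
  have hγ : 0 < γ := hα.trans hαγ
  set t := α ^ 2 / γ ^ 2 with ht
  have ht0 : 0 < t := by positivity
  have ht1 : t < 1 := by
    rw [ht, div_lt_one (by positivity)]
    exact pow_lt_pow_left₀ hαγ hα.le two_ne_zero
  refine ⟨α / γ ^ 2, by positivity, (1 - t / 2).toNNReal, Real.toNNReal_lt_one.2 (by linarith),
    fun z => ?_⟩
  rw [Real.coe_toNNReal _ (by linarith)]
  -- `‖z - ρ • A z‖ ^ 2 ≤ (1 - t) * ‖z‖ ^ 2` and `√(1 - t) ≤ 1 - t / 2`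
  refine (pow_le_pow_iff_left₀ (norm_nonneg _) (by nlinarith [norm_nonneg z]) two_ne_zero).1 ?_
  have hAz : ‖A z‖ ≤ γ * ‖z‖ := (A.le_opNorm z).trans (by gcongr)
  calc ‖z - (α / γ ^ 2) • A z‖ ^ 2
      = ‖z‖ ^ 2 - 2 * (α / γ ^ 2) * ⟪A z, z⟫ + (α / γ ^ 2) ^ 2 * ‖A z‖ ^ 2 := by
        rw [norm_sub_sq_real, real_inner_smul_right, norm_smul,
          Real.norm_of_nonneg (by positivity), real_inner_comm]
        ring
    _ ≤ ‖z‖ ^ 2 - 2 * (α / γ ^ 2) * (α * ‖z‖ ^ 2) + (α / γ ^ 2) ^ 2 * (γ * ‖z‖) ^ 2 := by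
        gcongr
        exact hA z
    _ = (1 - t) * ‖z‖ ^ 2 := by rw [ht]; field_simp; ring
    _ ≤ ((1 - t / 2) * ‖z‖) ^ 2 := by nlinarith [mul_nonneg (sq_nonneg t) (sq_nonneg ‖z‖)]

variable [CompleteSpace V]

theorem exists_lipschitzWith_one_projection {K : Set V} (hne : K.Nonempty) (hcl : IsClosed K)
    (hcv : Convex ℝ K) :
    ∃ P : V → V, (∀ x, P x ∈ K ∧ ∀ w ∈ K, ⟪x - P x, w - P x⟫ ≤ 0) ∧ LipschitzWith 1 P := by
  have hproj (x : V) : ∃ p ∈ K, ∀ w ∈ K, ⟪x - p, w - p⟫ ≤ 0 := by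
    obtain ⟨p, hp, hmin⟩ := exists_norm_eq_iInf_of_complete_convex hne hcl.isComplete hcv x
    exact ⟨p, hp, (norm_eq_iInf_iff_real_inner_le_zero hcv hp).1 hmin⟩
  choose P hPK hP using hproj
  refine ⟨P, fun x => ⟨hPK x, hP x⟩, LipschitzWith.mk_one fun x y => ?_⟩
  rw [dist_eq_norm, dist_eq_norm]
  have hsq : ‖P x - P y‖ ^ 2 ≤ ‖x - y‖ * ‖P x - P y‖ :=
    calc ‖P x - P y‖ ^ 2
        ≤ ‖P x - P y‖ ^ 2 - ⟪x - P x, P y - P x⟫ - ⟪y - P y, P x - P y⟫ := by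
          linarith [hP x (P y) (hPK y), hP y (P x) (hPK x)]
      _ = ⟪x - y, P x - P y⟫ := by
          rw [← real_inner_self_eq_norm_sq]; simp only [inner_sub_left, inner_sub_right]; ring
      _ ≤ ‖x - y‖ * ‖P x - P y‖ := real_inner_le_norm _ _
  nlinarith [norm_nonneg (P x - P y), norm_nonneg (x - y)]

theorem exists_variationalInequality_solution (a : V →L[ℝ] V →L[ℝ] ℝ) {α : ℝ} (hα : 0 < α)
    (hcoer : ∀ v, α * ‖v‖ ^ 2 ≤ a v v) (f : V →L[ℝ] ℝ) {K : Set V} (hne : K.Nonempty)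
    (hcl : IsClosed K) (hcv : Convex ℝ K) :
    ∃ u ∈ K, ∀ w ∈ K, f (w - u) ≤ a u (w - u) := by
  set A := InnerProductSpace.continuousLinearMapOfBilin (𝕜 := ℝ) a
  have hA (u v : V) : ⟪A u, v⟫ = a u v := InnerProductSpace.continuousLinearMapOfBilin_apply a u v
  set F := (InnerProductSpace.toDual ℝ V).symm f
  have hF (v : V) : ⟪F, v⟫ = f v := InnerProductSpace.toDual_symm_apply
  obtain ⟨P, hP, hPlip⟩ := exists_lipschitzWith_one_projection hne hcl hcv
  obtain ⟨ρ, hρ, k, hk, hcontr⟩ :=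
    exists_contraction_sub_smul A hα fun z => (hA z z).symm ▸ hcoer z
  -- by the projection inequality, a fixed point of `T` solves the variational inequality
  set T : V → V := fun x => P (x - ρ • (A x - F))
  have hT : ContractingWith k T := by
    refine ⟨hk, one_mul k ▸ hPlip.comp (LipschitzWith.of_dist_le_mul fun x y => ?_)⟩
    rw [dist_eq_norm, dist_eq_norm]
    refine le_of_eq_of_le (congrArg norm ?_) (hcontr (x - y))
    rw [map_sub]
    module
  set u := ContractingWith.fixedPoint T hT
  have hu : P (u - ρ • (A u - F)) = u := hT.fixedPoint_isFixedPt
  refine ⟨u, hu ▸ (hP _).1, fun w hw => ?_⟩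
  have hineq := (hP (u - ρ • (A u - F))).2 w hw
  rw [hu, sub_sub_cancel_left, inner_neg_left, real_inner_smul_left, neg_nonpos,
    inner_sub_left, hA, hF] at hineq
  linarith [nonneg_of_mul_nonneg_right hineq hρ]

end Hilbert

section InfSup

variable {V Q : Type*} [NormedAddCommGroup V] [InnerProductSpace ℝ V] [CompleteSpace V]
  [NormedAddCommGroup Q] [InnerProductSpace ℝ Q]

noncomputable def rieszFlip (b : V →L[ℝ] Q →L[ℝ] ℝ) : Q →L[ℝ] V :=
  (InnerProductSpace.toDual ℝ V).symm.toContinuousLinearEquiv.toContinuousLinearMap ∘L b.flip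

theorem inner_rieszFlip_apply (b : V →L[ℝ] Q →L[ℝ] ℝ) (q : Q) (v : V) :
    ⟪rieszFlip b q, v⟫ = b v q :=
  InnerProductSpace.toDual_symm_apply

theorem norm_rieszFlip_apply (b : V →L[ℝ] Q →L[ℝ] ℝ) (q : Q) : ‖rieszFlip b q‖ = ‖b.flip q‖ :=
  (InnerProductSpace.toDual ℝ V).symm.norm_map _

variable {b : V →L[ℝ] Q →L[ℝ] ℝ} {β₀ : ℝ}

theorem antilipschitzWith_rieszFlip (hβ₀ : 0 < β₀) (hinfsup : ∀ q : Q, β₀ * ‖q‖ ≤ ‖b.flip q‖) :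
    AntilipschitzWith (Real.toNNReal β₀⁻¹) (rieszFlip b) :=
  (rieszFlip b).antilipschitz_of_bound fun q => by
    rw [Real.coe_toNNReal _ (by positivity), norm_rieszFlip_apply, inv_mul_eq_div,
      le_div_iff₀' hβ₀]
    exact hinfsup q

variable [CompleteSpace Q]

theorem surjective_of_infSup (hβ₀ : 0 < β₀) (hinfsup : ∀ q : Q, β₀ * ‖q‖ ≤ ‖b.flip q‖) :
    Function.Surjective b := by
  -- Lax–Milgram for the coercive form `(p, q) ↦ ⟪B'p, B'q⟫`, `B' = rieszFlip b`
  have hc : IsCoercive (b ∘L rieszFlip b) := by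
    refine ⟨β₀ ^ 2, by positivity, fun p => ?_⟩
    rw [ContinuousLinearMap.comp_apply, ← inner_rieszFlip_apply, real_inner_self_eq_norm_sq,
      norm_rieszFlip_apply]
    nlinarith [hinfsup p, mul_nonneg hβ₀.le (norm_nonneg p)]
  intro ℓ
  refine ⟨rieszFlip b
    (hc.continuousLinearEquivOfBilin.symm ((InnerProductSpace.toDual ℝ Q).symm ℓ)),
    ContinuousLinearMap.ext fun q => ?_⟩
  rw [← ContinuousLinearMap.comp_apply, ← hc.continuousLinearEquivOfBilin_apply,
    ContinuousLinearEquiv.apply_symm_apply, InnerProductSpace.toDual_symm_apply]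

def properConeOfConvex {E : Type*} [AddCommGroup E] [Module ℝ E] [TopologicalSpace E]
    (M : Set E) (h0 : (0 : E) ∈ M) (hcl : IsClosed M) (hcv : Convex ℝ M)
    (hcone : ∀ c : ℝ, 0 ≤ c → ∀ q ∈ M, c • q ∈ M) : ProperCone ℝ E where
  carrier := M
  add_mem' {p q} hp hq := by
    convert hcone 2 zero_le_two _ (hcv hp hq one_half_pos.le one_half_pos.le (add_halves 1))
      using 1
    module
  zero_mem' := h0
  smul_mem' c q hq := hcone c c.2 q hq
  isClosed' := hcl

theorem exists_mem_flip_eq_of_forall_nonneg {M : Set Q} (h0 : (0 : Q) ∈ M) (hcl : IsClosed M)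
    (hcv : Convex ℝ M) (hcone : ∀ c : ℝ, 0 ≤ c → ∀ q ∈ M, c • q ∈ M) (hβ₀ : 0 < β₀)
    (hinfsup : ∀ q : Q, β₀ * ‖q‖ ≤ ‖b.flip q‖) {ℓ : V →L[ℝ] ℝ}
    (hℓ : ∀ y, (∀ q ∈ M, 0 ≤ b y q) → 0 ≤ ℓ y) : ∃ lam ∈ M, b.flip lam = ℓ := by
  set C := properConeOfConvex M h0 hcl hcv hcone
  have hmap : (InnerProductSpace.toDual ℝ V).symm ℓ ∈ C.map (rieszFlip b) := by
    refine ProperCone.relative_hyperplane_separation.2 fun y hy => ?_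
    rw [InnerProductSpace.toDual_symm_apply]
    refine hℓ y fun q hq => ?_
    simpa [ContinuousLinearMap.adjoint_inner_right, inner_rieszFlip_apply] using hy hq
  have hclosed : IsClosed (rieszFlip b '' M) :=
    ((antilipschitzWith_rieszFlip hβ₀ hinfsup).isClosedEmbedding
      (rieszFlip b).uniformContinuous).isClosedMap M hcl
  obtain ⟨lam, hlam, hBlam⟩ : (InnerProductSpace.toDual ℝ V).symm ℓ ∈ rieszFlip b '' M :=
    hclosed.closure_eq ▸ hmap
  refine ⟨lam, hlam, ContinuousLinearMap.ext fun v => ?_⟩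
  rw [ContinuousLinearMap.flip_apply, ← inner_rieszFlip_apply, hBlam,
    InnerProductSpace.toDual_symm_apply]

end InfSup

theorem forall_mem_apply_sub_le_iff {E F : Type*} [AddCommGroup E] [Module ℝ E] [FunLike F E ℝ]
    [LinearMapClass F ℝ E ℝ] {M : Set E} (hcone : ∀ c : ℝ, 0 ≤ c → ∀ q ∈ M, c • q ∈ M)
    {lam : E} (hlam : lam ∈ M) (φ ψ : F) :
    (∀ q ∈ M, φ (q - lam) ≤ ψ (q - lam)) ↔ (∀ q ∈ M, φ q ≤ ψ q) ∧ φ lam = ψ lam := by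
  constructor
  · intro h
    have hneg := h 0 (by simpa using hcone 0 le_rfl lam hlam)
    have hpos := h ((2 : ℝ) • lam) (hcone 2 zero_le_two lam hlam)
    rw [zero_sub, map_neg, map_neg, neg_le_neg_iff] at hneg
    rw [two_smul, add_sub_cancel_right] at hpos
    refine ⟨fun q hq => ?_, le_antisymm hpos hneg⟩
    linarith [map_sub φ q lam ▸ map_sub ψ q lam ▸ h q hq]
  · rintro ⟨h, heq⟩ q hq
    rw [map_sub, map_sub, heq]
    linarith [h q hq]

section KKT

variable {V Q : Type*} [NormedAddCommGroup V] [InnerProductSpace ℝ V] [CompleteSpace V]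
  [NormedAddCommGroup Q] [InnerProductSpace ℝ Q]

def IsKKTSolution (a : V →L[ℝ] V →L[ℝ] ℝ) (b : V →L[ℝ] Q →L[ℝ] ℝ) (f : V →L[ℝ] ℝ)
    (g : Q →L[ℝ] ℝ) (M : Set Q) (u : V) (lam : Q) : Prop :=
  (∀ v : V, a u v + b v lam = f v) ∧ (∀ q ∈ M, 0 ≤ g q - b u q) ∧ lam ∈ M ∧
    g lam - b u lam = 0

variable {a : V →L[ℝ] V →L[ℝ] ℝ} {α : ℝ} {b : V →L[ℝ] Q →L[ℝ] ℝ} {f : V →L[ℝ] ℝ}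
  {g : Q →L[ℝ] ℝ} {M : Set Q} {β₀ : ℝ}

theorem IsKKTSolution.unique (hα : 0 < α) (hcoer : ∀ v : V, α * ‖v‖ ^ 2 ≤ a v v) (hβ₀ : 0 < β₀)
    (hinfsup : ∀ q : Q, β₀ * ‖q‖ ≤ ‖b.flip q‖) {u₁ u₂ : V} {lam₁ lam₂ : Q}
    (h₁ : IsKKTSolution a b f g M u₁ lam₁) (h₂ : IsKKTSolution a b f g M u₂ lam₂) :
    u₁ = u₂ ∧ lam₁ = lam₂ := by
  obtain ⟨heq₁, hfeas₁, hlam₁, hcompl₁⟩ := h₁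
  obtain ⟨heq₂, hfeas₂, hlam₂, hcompl₂⟩ := h₂
  have hdiff (v : V) : a (u₁ - u₂) v = b v lam₂ - b v lam₁ := by
    rw [map_sub, sub_apply]
    linarith [heq₁ v, heq₂ v]
  have hu : u₁ = u₂ := by
    have hnonpos : a (u₁ - u₂) (u₁ - u₂) ≤ 0 := by
      rw [hdiff, map_sub, sub_apply, sub_apply]
      linarith [hfeas₁ lam₂ hlam₂, hfeas₂ lam₁ hlam₁]
    have hsq : ‖u₁ - u₂‖ ^ 2 ≤ 0 :=
      le_of_mul_le_mul_left (by simpa using (hcoer _).trans hnonpos) hα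
    simpa [sub_eq_zero] using hsq
  refine ⟨hu, (antilipschitzWith_rieszFlip hβ₀ hinfsup).injective ?_⟩
  refine ext_inner_right ℝ fun v => ?_
  have := hdiff v
  rw [hu, sub_self, map_zero, zero_apply] at this
  rw [inner_rieszFlip_apply, inner_rieszFlip_apply]
  linarith

variable [CompleteSpace Q]

theorem exists_isKKTSolution (hα : 0 < α) (hcoer : ∀ v : V, α * ‖v‖ ^ 2 ≤ a v v)
    (h0 : (0 : Q) ∈ M) (hcl : IsClosed M) (hcv : Convex ℝ M)
    (hcone : ∀ c : ℝ, 0 ≤ c → ∀ q ∈ M, c • q ∈ M) (hβ₀ : 0 < β₀)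
    (hinfsup : ∀ q : Q, β₀ * ‖q‖ ≤ ‖b.flip q‖) :
    ∃ u lam, IsKKTSolution a b f g M u lam := by
  obtain ⟨v₀, hv₀⟩ := surjective_of_infSup hβ₀ hinfsup g
  set K : Set V := ⋂ q ∈ M, {v | b.flip q v ≤ g q}
  have hmemK {v : V} : v ∈ K ↔ ∀ q ∈ M, b v q ≤ g q := by simp [K]
  have hv₀K : v₀ ∈ K := hmemK.2 fun q _ => by rw [hv₀]
  obtain ⟨u, huK, hvi⟩ := exists_variationalInequality_solution a hα hcoer f ⟨v₀, hv₀K⟩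
    (isClosed_biInter fun q _ => isClosed_le (b.flip q).continuous continuous_const)
    (convex_iInter₂ fun q _ => convex_halfSpace_le (b.flip q).toLinearMap.isLinear (g q))
  have hfeas : ∀ q ∈ M, b u q ≤ g q := hmemK.1 huK
  -- `u - y ∈ K` whenever `b y ≥ 0` on `M`
  obtain ⟨lam, hlam, hflip⟩ := exists_mem_flip_eq_of_forall_nonneg (ℓ := f - a u) h0 hcl hcv
    hcone hβ₀ hinfsup fun y hy => by
      have := hvi (u - y) (hmemK.2 fun q hq => by
        rw [map_sub, sub_apply]; linarith [hfeas q hq, hy q hq])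
      rw [sub_sub_cancel_left, map_neg, map_neg] at this
      simpa using this
  have hmult (v : V) : b v lam = f v - a u v := by
    simpa using DFunLike.congr_fun hflip v
  refine ⟨u, lam, fun v => by rw [hmult]; ring, fun q hq => sub_nonneg.2 (hfeas q hq), hlam, ?_⟩
  have hcompl : g lam - b u lam ≤ 0 := by
    rw [← hv₀, ← sub_apply, ← map_sub, hmult]
    linarith [hvi v₀ hv₀K]
  linarith [hfeas lam hlam]

end KKT

theorem stmt_4_general {V Q : Type*}
    [NormedAddCommGroup V] [InnerProductSpace ℝ V] [CompleteSpace V]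
    [NormedAddCommGroup Q] [InnerProductSpace ℝ Q] [CompleteSpace Q]
    (a : V →L[ℝ] V →L[ℝ] ℝ) (α : ℝ) (hα : 0 < α)
    (hcoer : ∀ v : V, α * ‖v‖ ^ 2 ≤ a v v)
    (b : V →L[ℝ] Q →L[ℝ] ℝ) (f : V →L[ℝ] ℝ) (g : Q →L[ℝ] ℝ)
    (M : Set Q) (hMne : M.Nonempty) (hMcl : IsClosed M) (hMcv : Convex ℝ M)
    (hMcone : ∀ c : ℝ, 0 ≤ c → ∀ q ∈ M, c • q ∈ M)
    (β₀ : ℝ) (hβ₀ : 0 < β₀)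
    (hinfsup : ∀ q : Q, β₀ * ‖q‖ ≤ ‖b.flip q‖) :
    (∃! p : V × Q, (∀ v : V, a p.1 v + b v p.2 = f v) ∧
        (∀ q ∈ M, 0 ≤ g q - b p.1 q) ∧ p.2 ∈ M ∧ g p.2 - b p.1 p.2 = 0) ∧
    (∀ u : V, ∀ lam : Q, lam ∈ M →
      (((∀ v : V, a u v + b v lam = f v) ∧
          (∀ q ∈ M, b u (q - lam) ≤ g (q - lam))) ↔
        ((∀ v : V, a u v + b v lam = f v) ∧
          (∀ q ∈ M, 0 ≤ g q - b u q) ∧ g lam - b u lam = 0))) := by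
  have h0 : (0 : Q) ∈ M := by simpa using hMcone 0 le_rfl _ hMne.some_mem
  refine ⟨?_, fun u lam hlam => ?_⟩
  · obtain ⟨u, lam, hsol⟩ :=
      exists_isKKTSolution (f := f) (g := g) hα hcoer h0 hMcl hMcv hMcone hβ₀ hinfsup
    refine ⟨(u, lam), hsol, fun p hp => ?_⟩
    obtain ⟨hu, hlam⟩ := IsKKTSolution.unique hα hcoer hβ₀ hinfsup hp hsol
    exact Prod.ext hu hlam
  · rw [forall_mem_apply_sub_le_iff hMcone hlam (b u) g]
    simp only [sub_nonneg, sub_eq_zero, eq_comm (a := g lam)]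

/-- Under the inf-sup condition, the generalized KKT system has a unique solution,
and a pair `(u, λ) ∈ V × M` solves the mixed problem iff it solves the KKT system. -/
theorem stmt_4 {V Q : Type*}
    [NormedAddCommGroup V] [InnerProductSpace ℝ V] [CompleteSpace V]
    [NormedAddCommGroup Q] [InnerProductSpace ℝ Q] [CompleteSpace Q]
    (a : V →L[ℝ] V →L[ℝ] ℝ) (α : ℝ) (hα : 0 < α)
    (hcoer : ∀ v : V, α * ‖v‖ ^ 2 ≤ a v v)
    (b : V →L[ℝ] Q →L[ℝ] ℝ) (f : V →L[ℝ] ℝ) (g : Q →L[ℝ] ℝ)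
    (M : Set Q) (hMne : M.Nonempty) (hMcl : IsClosed M) (hMcv : Convex ℝ M)
    (hMcone : ∀ c : ℝ, 0 ≤ c → ∀ q ∈ M, c • q ∈ M)
    (β₀ : ℝ) (hβ₀ : 0 < β₀)
    (hinfsup : ∀ q : Q, β₀ * ‖q‖ ≤ ‖b.flip q‖)
    (hKne : {v : V | ∀ q ∈ M, b v q ≤ g q}.Nonempty) :
    (∃! p : V × Q, (∀ v : V, a p.1 v + b v p.2 = f v) ∧
        (∀ q ∈ M, 0 ≤ g q - b p.1 q) ∧ p.2 ∈ M ∧ g p.2 - b p.1 p.2 = 0) ∧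
    (∀ u : V, ∀ lam : Q, lam ∈ M →
      (((∀ v : V, a u v + b v lam = f v) ∧
          (∀ q ∈ M, b u (q - lam) ≤ g (q - lam))) ↔
        ((∀ v : V, a u v + b v lam = f v) ∧
          (∀ q ∈ M, 0 ≤ g q - b u q) ∧ g lam - b u lam = 0))) :=
  stmt_4_general a α hα hcoer b f g M hMne hMcl hMcv hMcone β₀ hβ₀ hinfsup
end

section
/- Let λ, λ_n ∈ M, let e_i ∈ Q be the Riesz representation of the inequality residual, i.e. (e_i, q)_Q = r_i(q) for all q ∈ Q, and let Π : Q → M be a (possibly nonlinear) map satisfying (q − Π(q), η)_Q ≤ 0 for all q ∈ Q and all η ∈ M. Then r_i(λ) ≤ δ₁‖λ − λ_n‖_Q + δ₂, where δ₁ := ‖Π(e_i)‖_Q and δ₂ := (λ_n, Π(e_i))_Q. -/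
open scoped RealInnerProductSpace

/-- `r_i(λ) ≤ δ₁‖λ − λ_n‖ + δ₂` with `δ₁ = ‖Π(e_i)‖` and `δ₂ = (λ_n, Π(e_i))_Q`. -/
theorem stmt_9 {Q : Type*}
    [NormedAddCommGroup Q] [InnerProductSpace ℝ Q] [CompleteSpace Q]
    (M : Set Q) (hMne : M.Nonempty) (hMcl : IsClosed M) (hMcv : Convex ℝ M)
    (hMcone : ∀ c : ℝ, 0 ≤ c → ∀ q ∈ M, c • q ∈ M)
    (ri : Q →L[ℝ] ℝ) (ei : Q) (hei : ∀ q : Q, ⟪ei, q⟫ = ri q)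
    (Pi : Q → Q) (hPiM : ∀ q : Q, Pi q ∈ M)
    (hPi : ∀ q : Q, ∀ η ∈ M, ⟪q - Pi q, η⟫ ≤ 0)
    (lam lamn : Q) (hlam : lam ∈ M) (hlamn : lamn ∈ M) :
    ri lam ≤ ‖Pi ei‖ * ‖lam - lamn‖ + ⟪lamn, Pi ei⟫ := by
  have h1 : ri lam = ⟪ei - Pi ei, lam⟫ + ⟪Pi ei, lam - lamn⟫ + ⟪Pi ei, lamn⟫ := by
    rw [← hei]
    simp [inner_sub_left, inner_sub_right]
  have h2 := hPi ei lam hlam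
  have h3 : ⟪Pi ei, lam - lamn⟫ ≤ ‖Pi ei‖ * ‖lam - lamn‖ := real_inner_le_norm _ _
  have h4 : ⟪Pi ei, lamn⟫ = ⟪lamn, Pi ei⟫ := real_inner_comm _ _
  linarith [h1, h2, h3]
end

section
/- (Haasdonk–Salomon–Wohlmuth a posteriori bounds.) Let (u, λ) ∈ V × M solve the mixed problem: a(u,v) + b(v,λ) = f(v) for all v ∈ V and b(u, q − λ) ≤ g(q − λ) for all q ∈ M. Let (u_n, λ_n) ∈ V × M satisfy the complementarity condition b(u_n, λ_n) = g(λ_n). Define r_e(v) := f(v) − a(u_n, v) − b(v, λ_n); let e_i ∈ Q be the Riesz representation of r_i(q) := b(u_n, q) − g(q); let Π : Q → M satisfy (q − Π(q), η)_Q ≤ 0 for all q ∈ Q, η ∈ M. Set δ₀ := ‖r_e‖_{V'}, δ₁ := ‖Π(e_i)‖_Q, δ₂ := (λ_n, Π(e_i))_Q, ĉ₁ := (1/(2α))(δ₀ + γδ₁/β), ĉ₂ := (1/α)(δ₀δ₁/β + δ₂). Then ‖u − u_n‖_V ≤ Δ_u := ĉ₁ + √(ĉ₁² + ĉ₂) and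 ‖λ − λ_n‖_Q ≤ (1/β)(δ₀ + γΔ_u). -/
/-!
Write `e_u = u - u_n` and `e_λ = λ - λ_n`. The error satisfies `a(e_u, v) + b(v, e_λ) = r_e(v)`, so
inf-sup stability gives `β ‖e_λ‖ ≤ δ₀ + γ ‖e_u‖`. Testing with `v = e_u` and using coercivity,
`α ‖e_u‖² ≤ δ₀ ‖e_u‖ - b(e_u, e_λ)`; the variational inequality at `q = λ_n`, complementarity and
the projection property of `Π` bound `-b(e_u, e_λ)` by `(Π e_i, λ) ≤ δ₁ ‖e_λ‖ + δ₂`. Eliminating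
`‖e_λ‖` leaves the quadratic inequality `‖e_u‖² ≤ 2 ĉ₁ ‖e_u‖ + ĉ₂`, whose larger root is `Δ_u`.
-/

open scoped RealInnerProductSpace

theorem le_add_sqrt_of_sq_le {t c d : ℝ} (h : t ^ 2 ≤ 2 * c * t + d) :
    t ≤ c + √(c ^ 2 + d) := by
  have hsq : (t - c) ^ 2 ≤ c ^ 2 + d := by nlinarith
  linarith [le_of_abs_le (Real.abs_le_sqrt hsq)]

theorem ContinuousLinearMap.opNorm_le_of_apply_le {E F : Type*} [SeminormedAddCommGroup E]
    [NormedSpace ℝ E] [SeminormedAddCommGroup F] [NormedSpace ℝ F] (a : E →L[ℝ] F →L[ℝ] ℝ) {γ : ℝ}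
    (hγ0 : 0 ≤ γ) (h : ∀ w v, a w v ≤ γ * (‖w‖ * ‖v‖)) : ‖a‖ ≤ γ := by
  refine a.opNorm_le_bound hγ0 fun w ↦ (a w).opNorm_le_bound (by positivity) fun v ↦ ?_
  rw [Real.norm_eq_abs, abs_le]
  have := h w (-v)
  rw [map_neg, norm_neg] at this
  exact ⟨by linarith, by linarith [h w v]⟩

theorem le_of_coercive_of_apply_le {E : Type*} [NormedAddCommGroup E] [NormedSpace ℝ E]
    [Nontrivial E] (a : E →L[ℝ] E →L[ℝ] ℝ) {α γ : ℝ}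
    (hcoer : ∀ v, α * ‖v‖ ^ 2 ≤ a v v) (hγ : ∀ w v, a w v ≤ γ * (‖w‖ * ‖v‖)) : α ≤ γ := by
  obtain ⟨v, hv0⟩ := exists_ne (0 : E)
  have hv : 0 < ‖v‖ ^ 2 := by positivity
  nlinarith [hcoer v, hγ v v]

section MixedProblem

variable {V Q : Type*} [NormedAddCommGroup V] [InnerProductSpace ℝ V]
  [NormedAddCommGroup Q] [InnerProductSpace ℝ Q]
  {a : V →L[ℝ] V →L[ℝ] ℝ} {b : V →L[ℝ] Q →L[ℝ] ℝ} {f : V →L[ℝ] ℝ} {g : Q →L[ℝ] ℝ}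
  {u un : V} {lam lamn : Q}

theorem subsingleton_of_infSup [Subsingleton V] {β : ℝ} (hβ : 0 < β)
    (hinfsup : ∀ q : Q, β * ‖q‖ ≤ ‖b.flip q‖) : Subsingleton Q := by
  refine subsingleton_of_forall_eq 0 fun q ↦ norm_le_zero_iff.mp ?_
  have := hinfsup q
  rw [(b.flip q).opNorm_subsingleton] at this
  nlinarith [norm_nonneg q]

theorem flip_apply_error_eq (hsol : ∀ v, a u v + b v lam = f v) :
    b.flip (lam - lamn) = (f - a un - b.flip lamn) - a (u - un) := by
  ext v
  simp only [ContinuousLinearMap.flip_apply, map_sub, sub_apply]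
  linarith [hsol v]

theorem infSup_mul_norm_error_le {β γ : ℝ} (ha : ‖a‖ ≤ γ)
    (hinfsup : ∀ q : Q, β * ‖q‖ ≤ ‖b.flip q‖) (hsol : ∀ v, a u v + b v lam = f v) :
    β * ‖lam - lamn‖ ≤ ‖f - a un - b.flip lamn‖ + γ * ‖u - un‖ := by
  have h := (a.le_opNorm (u - un)).trans (mul_le_mul_of_nonneg_right ha (norm_nonneg _))
  calc β * ‖lam - lamn‖ ≤ ‖b.flip (lam - lamn)‖ := hinfsup _
    _ = ‖(f - a un - b.flip lamn) - a (u - un)‖ := by rw [flip_apply_error_eq hsol]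
    _ ≤ ‖f - a un - b.flip lamn‖ + ‖a (u - un)‖ := norm_sub_le _ _
    _ ≤ ‖f - a un - b.flip lamn‖ + γ * ‖u - un‖ := by linarith

/-- `p` plays the role of `Π(e_i)`. -/
theorem neg_apply_error_le_inner {ei p : Q} (hvi : b u (lamn - lam) ≤ g (lamn - lam))
    (hcomp : b un lamn = g lamn) (hei : ∀ q, ⟪ei, q⟫ = b un q - g q)
    (hproj : ⟪ei - p, lam⟫ ≤ 0) :
    -b (u - un) (lam - lamn) ≤ ⟪p, lam⟫ := by
  have hei_lam := hei lam
  rw [inner_sub_left] at hproj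
  simp only [map_sub, sub_apply] at hvi ⊢
  linarith

theorem coercive_mul_sq_norm_error_le {α : ℝ} {ei p : Q}
    (hcoer : ∀ v, α * ‖v‖ ^ 2 ≤ a v v) (hsol : ∀ v, a u v + b v lam = f v)
    (hvi : b u (lamn - lam) ≤ g (lamn - lam)) (hcomp : b un lamn = g lamn)
    (hei : ∀ q, ⟪ei, q⟫ = b un q - g q) (hproj : ⟪ei - p, lam⟫ ≤ 0) :
    α * ‖u - un‖ ^ 2 ≤
      ‖f - a un - b.flip lamn‖ * ‖u - un‖ + ‖p‖ * ‖lam - lamn‖ + ⟪lamn, p⟫ := by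
  have hres : b (u - un) (lam - lamn) = (f - a un - b.flip lamn) (u - un) - a (u - un) (u - un) := by
    rw [← b.flip_apply, flip_apply_error_eq hsol, sub_apply]
  have hR := le_of_abs_le ((f - a un - b.flip lamn).le_opNorm (u - un))
  have hp : ⟪p, lam⟫ = ⟪p, lam - lamn⟫ + ⟪lamn, p⟫ := by
    rw [inner_sub_right, real_inner_comm lamn]; ring
  linarith [hcoer (u - un), real_inner_le_norm p (lam - lamn),
    neg_apply_error_le_inner hvi hcomp hei hproj]

end MixedProblem

theorem stmt_10_general {V Q : Type*}
    [NormedAddCommGroup V] [InnerProductSpace ℝ V]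
    [NormedAddCommGroup Q] [InnerProductSpace ℝ Q]
    (a : V →L[ℝ] V →L[ℝ] ℝ) (α γ : ℝ) (hα : 0 < α)
    (hcoer : ∀ v : V, α * ‖v‖ ^ 2 ≤ a v v)
    (hγ : ∀ w v : V, a w v ≤ γ * (‖w‖ * ‖v‖))
    (b : V →L[ℝ] Q →L[ℝ] ℝ) (β : ℝ) (hβ : 0 < β)
    (hinfsup : ∀ q : Q, β * ‖q‖ ≤ ‖b.flip q‖)
    (f : V →L[ℝ] ℝ) (g : Q →L[ℝ] ℝ)
    (M : Set Q)
    (u un : V) (lam lamn : Q) (hlam : lam ∈ M) (hlamn : lamn ∈ M)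
    (hsol1 : ∀ v : V, a u v + b v lam = f v)
    (hsol2 : ∀ q ∈ M, b u (q - lam) ≤ g (q - lam))
    (hcomp : b un lamn = g lamn)
    (ei : Q) (hei : ∀ q : Q, ⟪ei, q⟫ = b un q - g q)
    (Pi : Q → Q)
    (hPi : ∀ q : Q, ∀ η ∈ M, ⟪q - Pi q, η⟫ ≤ 0)
    (δ₀ δ₁ δ₂ c₁ c₂ : ℝ)
    (hδ₀ : δ₀ = ‖f - a un - b.flip lamn‖)
    (hδ₁ : δ₁ = ‖Pi ei‖) (hδ₂ : δ₂ = ⟪lamn, Pi ei⟫)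
    (hc₁ : c₁ = (1 / (2 * α)) * (δ₀ + γ * δ₁ / β))
    (hc₂ : c₂ = (1 / α) * (δ₀ * δ₁ / β + δ₂)) :
    ‖u - un‖ ≤ c₁ + Real.sqrt (c₁ ^ 2 + c₂) ∧
    ‖lam - lamn‖ ≤ (1 / β) * (δ₀ + γ * (c₁ + Real.sqrt (c₁ ^ 2 + c₂))) := by
  -- `0 ≤ γ` needs a nonzero vector; for `V = 0`, inf-sup forces `Q = 0` and everything vanishes.
  rcases subsingleton_or_nontrivial V with hV | hV
  · have := subsingleton_of_infSup hβ hinfsup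
    subst_vars
    simp [norm_of_subsingleton, Subsingleton.elim lamn 0]
  have hγ0 : 0 ≤ γ := hα.le.trans (le_of_coercive_of_apply_le a hcoer hγ)
  have hdual := infSup_mul_norm_error_le (lamn := lamn) (un := un) (a.opNorm_le_of_apply_le hγ0 hγ)
    hinfsup hsol1
  have hprimal := coercive_mul_sq_norm_error_le hcoer hsol1 (hsol2 lamn hlamn) hcomp hei
    (hPi ei lam hlam)
  rw [← hδ₀] at hdual hprimal
  rw [← hδ₁, ← hδ₂] at hprimal
  have hdual' : ‖lam - lamn‖ ≤ (δ₀ + γ * ‖u - un‖) / β := by rw [le_div_iff₀ hβ]; linarith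
  have hquad : ‖u - un‖ ^ 2 ≤ 2 * c₁ * ‖u - un‖ + c₂ := by
    have hδ₁0 : 0 ≤ δ₁ := hδ₁ ▸ norm_nonneg _
    have : α * ‖u - un‖ ^ 2 ≤ α * (2 * c₁ * ‖u - un‖ + c₂) := by
      rw [hc₁, hc₂]; field_simp
      nlinarith [mul_le_mul_of_nonneg_left hdual' hδ₁0]
    exact le_of_mul_le_mul_left this hα
  have hu := le_add_sqrt_of_sq_le hquad
  refine ⟨hu, ?_⟩
  rw [one_div_mul_eq_div]
  exact hdual'.trans (by gcongr)

/-- Haasdonk–Salomon–Wohlmuth a posteriori error bounds for the primal-only approach. -/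
theorem stmt_10 {V Q : Type*}
    [NormedAddCommGroup V] [InnerProductSpace ℝ V] [CompleteSpace V]
    [NormedAddCommGroup Q] [InnerProductSpace ℝ Q] [CompleteSpace Q]
    (a : V →L[ℝ] V →L[ℝ] ℝ) (α γ : ℝ) (hα : 0 < α)
    (hcoer : ∀ v : V, α * ‖v‖ ^ 2 ≤ a v v)
    (hγ : ∀ w v : V, a w v ≤ γ * (‖w‖ * ‖v‖))
    (b : V →L[ℝ] Q →L[ℝ] ℝ) (β : ℝ) (hβ : 0 < β)
    (hinfsup : ∀ q : Q, β * ‖q‖ ≤ ‖b.flip q‖)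
    (f : V →L[ℝ] ℝ) (g : Q →L[ℝ] ℝ)
    (M : Set Q) (hMne : M.Nonempty) (hMcl : IsClosed M) (hMcv : Convex ℝ M)
    (hMcone : ∀ c : ℝ, 0 ≤ c → ∀ q ∈ M, c • q ∈ M)
    (u un : V) (lam lamn : Q) (hlam : lam ∈ M) (hlamn : lamn ∈ M)
    (hsol1 : ∀ v : V, a u v + b v lam = f v)
    (hsol2 : ∀ q ∈ M, b u (q - lam) ≤ g (q - lam))
    (hcomp : b un lamn = g lamn)
    (ei : Q) (hei : ∀ q : Q, ⟪ei, q⟫ = b un q - g q)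
    (Pi : Q → Q) (hPiM : ∀ q : Q, Pi q ∈ M)
    (hPi : ∀ q : Q, ∀ η ∈ M, ⟪q - Pi q, η⟫ ≤ 0)
    (δ₀ δ₁ δ₂ c₁ c₂ : ℝ)
    (hδ₀ : δ₀ = ‖f - a un - b.flip lamn‖)
    (hδ₁ : δ₁ = ‖Pi ei‖) (hδ₂ : δ₂ = ⟪lamn, Pi ei⟫)
    (hc₁ : c₁ = (1 / (2 * α)) * (δ₀ + γ * δ₁ / β))
    (hc₂ : c₂ = (1 / α) * (δ₀ * δ₁ / β + δ₂))
    (hpos : 0 ≤ c₁ ^ 2 + c₂) :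
    ‖u - un‖ ≤ c₁ + Real.sqrt (c₁ ^ 2 + c₂) ∧
    ‖lam - lamn‖ ≤ (1 / β) * (δ₀ + γ * (c₁ + Real.sqrt (c₁ ^ 2 + c₂))) :=
  stmt_10_general a α γ hα hcoer hγ b β hβ hinfsup f g M u un lam lamn hlam hlamn hsol1 hsol2 hcomp
    ei hei Pi hPi δ₀ δ₁ δ₂ c₁ c₂ hδ₀ hδ₁ hδ₂ hc₁ hc₂
end

section
/- (Primal-dual a posteriori bounds.) Let (u, λ) ∈ V × Q solve the KKT system: a(u,v) + b(v,λ) = f(v) for all v ∈ V; g(q) − b(u,q) ≥ 0 for all q ∈ M; λ ∈ M; g(λ) − b(u,λ) = 0. Let u_n ∈ V be a strictly feasible approximation, meaning its slack s_n(q) := g(q) − b(u_n, q) satisfies s_n(q) ≥ 0 for all q ∈ M, and let λ_n ∈ M. Define r(v) := f(v) − a(u_n, v) − b(v, λ_n), d̃₁ := ‖r‖_{V'}/(2α), and d̃₂ := s_n(λ_n)/α. Then ‖u − u_n‖_V ≤ Δ_u := d̃₁ + √(d̃₁² + d̃₂), and if additionally the inf-sup constant β := inf_{q≠0} sup_{v≠0}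 b(v,q)/(‖q‖_Q‖v‖_V) > 0, then ‖λ − λ_n‖_Q ≤ (1/β)(‖r‖_{V'} + γΔ_u). -/
set_option maxHeartbeats 1000000 in
/-- Primal-dual a posteriori error bounds: for a strictly feasible approximation `u_n`
and `λ_n ∈ M`, `‖u − u_n‖ ≤ d̃₁ + √(d̃₁² + d̃₂)`; and under the inf-sup condition,
`‖λ − λ_n‖ ≤ (1/β)(‖r‖ + γ Δ_u)`. -/
theorem stmt_15 {V Q : Type*}
    [NormedAddCommGroup V] [InnerProductSpace ℝ V] [CompleteSpace V]
    [NormedAddCommGroup Q] [InnerProductSpace ℝ Q] [CompleteSpace Q]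
    (a : V →L[ℝ] V →L[ℝ] ℝ) (α γ : ℝ) (hα : 0 < α)
    (hcoer : ∀ v : V, α * ‖v‖ ^ 2 ≤ a v v)
    (hγ : ∀ w v : V, a w v ≤ γ * (‖w‖ * ‖v‖))
    (b : V →L[ℝ] Q →L[ℝ] ℝ) (f : V →L[ℝ] ℝ) (g : Q →L[ℝ] ℝ)
    (M : Set Q) (hMne : M.Nonempty) (hMcl : IsClosed M) (hMcv : Convex ℝ M)
    (hMcone : ∀ c : ℝ, 0 ≤ c → ∀ q ∈ M, c • q ∈ M)
    (u : V) (lam : Q)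
    (hsol1 : ∀ v : V, a u v + b v lam = f v)
    (hsol2 : ∀ q ∈ M, 0 ≤ g q - b u q)
    (hlam : lam ∈ M) (hcomp : g lam - b u lam = 0)
    (un : V) (hfeas : ∀ q ∈ M, 0 ≤ g q - b un q)
    (lamn : Q) (hlamn : lamn ∈ M)
    (d₁ d₂ : ℝ)
    (hd₁ : d₁ = ‖f - a un - b.flip lamn‖ / (2 * α))
    (hd₂ : d₂ = (g lamn - b un lamn) / α) :
    ‖u - un‖ ≤ d₁ + Real.sqrt (d₁ ^ 2 + d₂) ∧
    ∀ β : ℝ, 0 < β → (∀ q : Q, β * ‖q‖ ≤ ‖b.flip q‖) →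
      ‖lam - lamn‖ ≤ (1 / β) *
        (‖f - a un - b.flip lamn‖ + γ * (d₁ + Real.sqrt (d₁ ^ 2 + d₂))) := by
  set r : V →L[ℝ] ℝ := f - a un - b.flip lamn with hr
  have hrapp : ∀ v : V, r v = f v - a un v - b v lamn := by
    intro v; simp [hr]
  set e : V := u - un with he
  set E : ℝ := ‖e‖ with hE
  have hEnn : 0 ≤ E := norm_nonneg _
  have hd₁nn : 0 ≤ d₁ := by
    rw [hd₁]; positivity
  have hd₂nn : 0 ≤ d₂ := by
    rw [hd₂]; exact div_nonneg (hfeas lamn hlamn) hα.le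
  have haev : ∀ v : V, a e v = a u v - a un v := by
    intro v; simp [he, map_sub]
  -- key identity: a e e = r e + (b e lamn - b e lam)
  have hkey : a e e = r e + (b e lamn - b e lam) := by
    have h1 := hsol1 e
    have h2 : b e lamn = b u lamn - b un lamn := by simp [he, map_sub]
    have h3 : b e lam = b u lam - b un lam := by simp [he, map_sub]
    rw [haev, hrapp]; ring_nf; linarith [hsol1 e]
  have hb1 : b u lamn ≤ g lamn := by linarith [hsol2 lamn hlamn]
  have hb2 : b un lam ≤ g lam := by linarith [hfeas lam hlam]
  have hslack : b e lamn - b e lam ≤ α * d₂ := by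
    have h2 : b e lamn = b u lamn - b un lamn := by simp [he, map_sub]
    have h3 : b e lam = b u lam - b un lam := by simp [he, map_sub]
    have hd : α * d₂ = g lamn - b un lamn := by
      rw [hd₂]; field_simp
    rw [h2, h3, hd]; linarith
  have hrnorm : ‖r‖ = 2 * α * d₁ := by
    rw [hd₁]; field_simp
  have hre : r e ≤ 2 * α * d₁ * E := by
    calc r e ≤ ‖r‖ * ‖e‖ := by
          calc r e ≤ |r e| := le_abs_self _
          _ = ‖r e‖ := rfl
          _ ≤ ‖r‖ * ‖e‖ := r.le_opNorm e
    _ = 2 * α * d₁ * E := by rw [hrnorm]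
  have hquad : E ^ 2 ≤ 2 * d₁ * E + d₂ := by
    have h1 := hcoer e
    have h2 : a e e ≤ 2 * α * d₁ * E + α * d₂ := by rw [hkey]; linarith
    have h3 : α * E ^ 2 ≤ 2 * α * d₁ * E + α * d₂ := le_trans h1 h2
    clear h1 h2
    nlinarith [h3, hα]
  have hEΔ : E ≤ d₁ + Real.sqrt (d₁ ^ 2 + d₂) := by
    have h1 : (E - d₁) ^ 2 ≤ d₁ ^ 2 + d₂ := by nlinarith
    have h2 : E - d₁ ≤ Real.sqrt (d₁ ^ 2 + d₂) := by
      calc E - d₁ ≤ |E - d₁| := le_abs_self _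
      _ = Real.sqrt ((E - d₁) ^ 2) := (Real.sqrt_sq_eq_abs _).symm
      _ ≤ Real.sqrt (d₁ ^ 2 + d₂) := Real.sqrt_le_sqrt h1
    linarith
  refine ⟨hEΔ, ?_⟩
  intro β hβ hinfsup
  by_cases hV : ∀ v : V, v = (0 : V)
  · -- trivial V : everything vanishes
    have hbq : ∀ q : Q, b.flip q = 0 := by
      intro q; ext v; rw [hV v]; simp
    have hq0 : ∀ q : Q, q = 0 := by
      intro q
      have h := hinfsup q
      rw [hbq q, norm_zero] at h
      exact norm_le_zero_iff.mp (by nlinarith [norm_nonneg q])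
    have hlamlamn : lam - lamn = 0 := hq0 _
    have hr0 : r = 0 := by ext v; rw [hV v]; simp
    have hlamn0 : lamn = 0 := hq0 _
    have hd₂0 : d₂ = 0 := by rw [hd₂, hlamn0]; simp
    have hd₁0 : d₁ = 0 := by rw [hd₁, hr0]; simp
    rw [hlamlamn, hr0, hd₁0, hd₂0]
    simp
  · push_neg at hV
    obtain ⟨v₀, hv₀⟩ := hV
    have hγα : α ≤ γ := by
      have h1 := hcoer v₀
      have h2 := hγ v₀ v₀
      have hv₀n : 0 < ‖v₀‖ := norm_pos_iff.mpr hv₀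
      have h3 : α * ‖v₀‖ ^ 2 ≤ γ * ‖v₀‖ ^ 2 := by
        calc α * ‖v₀‖ ^ 2 ≤ a v₀ v₀ := h1
        _ ≤ γ * (‖v₀‖ * ‖v₀‖) := h2
        _ = γ * ‖v₀‖ ^ 2 := by ring
      have hs : 0 < ‖v₀‖ ^ 2 := by positivity
      exact le_of_mul_le_mul_right h3 hs
    have hγpos : 0 < γ := lt_of_lt_of_le hα hγα
    -- bound on ‖b.flip (lam - lamn)‖
    have habs : ∀ v : V, |a e v| ≤ γ * (E * ‖v‖) := by
      intro v
      have h1 := hγ e v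
      have h2 := hγ (-e) v
      rw [norm_neg] at h2
      simp only [map_neg, ContinuousLinearMap.neg_apply] at h2
      rw [abs_le]; constructor <;> [linarith; exact h1]
    have hbval : ∀ v : V, b v (lam - lamn) = r v - a e v := by
      intro v
      have := hsol1 v
      rw [hrapp, haev]
      simp [map_sub]
      linarith
    have hbnorm : ‖b.flip (lam - lamn)‖ ≤ ‖r‖ + γ * E := by
      apply ContinuousLinearMap.opNorm_le_bound
      · have : 0 ≤ γ * E := by positivity
        positivity
      · intro v
        have h1 : b.flip (lam - lamn) v = r v - a e v := hbval v
        rw [h1]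
        calc ‖r v - a e v‖ ≤ ‖r v‖ + ‖a e v‖ := norm_sub_le _ _
        _ ≤ ‖r‖ * ‖v‖ + γ * (E * ‖v‖) := add_le_add (r.le_opNorm v) (habs v)
        _ = (‖r‖ + γ * E) * ‖v‖ := by ring
    have hmain : β * ‖lam - lamn‖ ≤ ‖r‖ + γ * (d₁ + Real.sqrt (d₁ ^ 2 + d₂)) := by
      calc β * ‖lam - lamn‖ ≤ ‖b.flip (lam - lamn)‖ := hinfsup _
      _ ≤ ‖r‖ + γ * E := hbnorm
      _ ≤ ‖r‖ + γ * (d₁ + Real.sqrt (d₁ ^ 2 + d₂)) := by nlinarith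
    rw [one_div, inv_mul_eq_div, le_div_iff₀ hβ]
    linarith [hmain]
end

section
/- (Parametrized primal-only bounds with surrogate constants.) Under the hypotheses of the Haasdonk–Salomon–Wohlmuth a posteriori bounds — (u, λ) ∈ V × M solves the mixed problem a(u,v) + b(v,λ) = f(v) for all v ∈ V and b(u, q − λ) ≤ g(q − λ) for all q ∈ M; (u_n, λ_n) ∈ V × M satisfies b(u_n, λ_n) = g(λ_n); r_e(v) := f(v) − a(u_n, v) − b(v, λ_n); e_i is the Riesz representation of r_i(q) := b(u_n, q) − g(q); Π : Q → M satisfies (q − Π(q), η)_Q ≤ 0 for all q ∈ Q, η ∈ M — let α_LB and γ_UB be any constants with 0 < α_LB ≤ α and γ_UB ≥ γ. Set δ₀ := ‖r_e‖_{V'}, δ₁ := ‖Π(e_i)‖_Q, δ₂ := (λ_n, Π(e_i))_Q, c₁ := (1/(2α_LB))(δ₀ + γ_UB δ₁/β), c₂ := (1/α_LB)(δ₀δ₁/β + δ₂). Then ‖u − u_n‖_V ≤ Δ_u := c₁ + √(c₁² + c₂) and ‖λ − λ_n‖_Q ≤ (1/β)(δ₀ + γ_UB Δ_u). -/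
open scoped RealInnerProductSpace

/-!
With `e = u - uₙ` and `ε = λ - λₙ`, the residual satisfies `r_e = a(e, ·) + b(·, ε)`. Testing it
with `e` and using coercivity gives `α‖e‖² ≤ δ₀‖e‖ - b(e, ε)`, while the variational inequality
at `q = λₙ`, the complementarity `b(uₙ, λₙ) = g(λₙ)` and the projection property of `Π` bound
`-b(e, ε)` by `δ₁‖ε‖ + δ₂`. The inf-sup condition gives `β‖ε‖ ≤ δ₀ + γ_UB‖e‖`; substituting it
leaves the quadratic inequality `‖e‖² ≤ 2c₁‖e‖ + c₂`, whose larger root is `Δ_u`.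
If `γ_UB < 0`, coercivity and continuity force `V = 0`, hence `Q = 0`, and both bounds are trivial.
-/

theorem le_add_sqrt_of_sq_le_s16 {x c₁ c₂ : ℝ} (h : x ^ 2 ≤ 2 * c₁ * x + c₂) :
    x ≤ c₁ + √(c₁ ^ 2 + c₂) := by
  have hsq : (x - c₁) ^ 2 ≤ c₁ ^ 2 + c₂ := by nlinarith
  linarith [le_abs_self (x - c₁), Real.abs_le_sqrt hsq]

theorem sq_le_of_energy_le_of_infsup_le {αLB β γUB δ₀ δ₁ δ₂ x y : ℝ} (hαLB : 0 < αLB)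
    (hβ : 0 < β) (hδ₁ : 0 ≤ δ₁) (henergy : αLB * x ^ 2 ≤ δ₀ * x + δ₁ * y + δ₂)
    (hinfsup : β * y ≤ δ₀ + γUB * x) :
    x ^ 2 ≤ 2 * ((1 / (2 * αLB)) * (δ₀ + γUB * δ₁ / β)) * x
      + (1 / αLB) * (δ₀ * δ₁ / β + δ₂) := by
  have hy : β * (δ₁ * y) ≤ δ₁ * (δ₀ + γUB * x) := by nlinarith
  rw [← mul_le_mul_iff_of_pos_left (mul_pos hαLB hβ)]
  field_simp
  nlinarith

section BilinearForms

variable {V W Q : Type*} [NormedAddCommGroup V] [NormedSpace ℝ V]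
  [NormedAddCommGroup W] [NormedSpace ℝ W]

theorem ContinuousLinearMap.norm_apply_le_of_forall_apply_le (a : V →L[ℝ] W →L[ℝ] ℝ) {γ : ℝ}
    (hγ0 : 0 ≤ γ) (hγ : ∀ w v, a w v ≤ γ * (‖w‖ * ‖v‖)) (w : V) : ‖a w‖ ≤ γ * ‖w‖ := by
  refine (a w).opNorm_le_bound (by positivity) fun v => ?_
  rw [Real.norm_eq_abs, abs_le, mul_assoc]
  refine ⟨?_, hγ w v⟩
  have := hγ (-w) v
  rw [map_neg, neg_apply, norm_neg] at this
  linarith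

theorem subsingleton_of_coercive_of_bound_lt (a : V →L[ℝ] V →L[ℝ] ℝ) {α γ : ℝ}
    (hcoer : ∀ v, α * ‖v‖ ^ 2 ≤ a v v) (hγ : ∀ v, a v v ≤ γ * (‖v‖ * ‖v‖)) (hlt : γ < α) :
    Subsingleton V := by
  refine subsingleton_of_forall_eq 0 fun v => norm_le_zero_iff.mp ?_
  by_contra! hv
  have := (hcoer v).trans (hγ v)
  nlinarith [mul_pos (sub_pos.2 hlt) (mul_pos hv hv)]

theorem subsingleton_of_infsup [Subsingleton V] (b : V →L[ℝ] W →L[ℝ] ℝ) {β : ℝ} (hβ : 0 < β)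
    (hinfsup : ∀ q, β * ‖q‖ ≤ ‖b.flip q‖) : Subsingleton W := by
  refine subsingleton_of_forall_eq 0 fun q => norm_le_zero_iff.mp ?_
  have hzero : b.flip q = 0 :=
    ContinuousLinearMap.ext fun v => by rw [Subsingleton.elim v 0, map_zero, map_zero]
  have := hinfsup q
  rw [hzero, norm_zero] at this
  nlinarith [norm_nonneg q]

theorem residual_eq_of_forall_apply_add_eq (a : V →L[ℝ] V →L[ℝ] ℝ) (b : V →L[ℝ] W →L[ℝ] ℝ)
    (f : V →L[ℝ] ℝ) {u : V} {lam : W} (un : V) (lamn : W) (hsol : ∀ v, a u v + b v lam = f v) :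
    f - a un - b.flip lamn = a (u - un) + b.flip (lam - lamn) := by
  ext v
  simp only [sub_apply, add_apply, map_sub, ContinuousLinearMap.flip_apply, ← hsol v]
  ring

variable [NormedAddCommGroup Q] [InnerProductSpace ℝ Q]

theorem neg_apply_sub_sub_le {b : V →L[ℝ] Q →L[ℝ] ℝ} {g : Q →L[ℝ] ℝ} {u un : V}
    {lam lamn ei p : Q} (hsol : b u (lamn - lam) ≤ g (lamn - lam)) (hcomp : b un lamn = g lamn)
    (hei : ∀ q, ⟪ei, q⟫ = b un q - g q) (hp : ⟪ei - p, lam⟫ ≤ 0) :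
    -b (u - un) (lam - lamn) ≤ ‖p‖ * ‖lam - lamn‖ + ⟪lamn, p⟫ := by
  have hlamn : ⟪ei, lamn⟫ = 0 := by rw [hei, hcomp, sub_self]
  have hlam : ⟪ei, lamn - lam⟫ = b un (lamn - lam) - g (lamn - lam) := hei _
  have hp' : ⟪p, lam - lamn⟫ ≤ ‖p‖ * ‖lam - lamn‖ := real_inner_le_norm _ _
  rw [inner_sub_left] at hp
  rw [inner_sub_right] at hlam hp'
  rw [← neg_sub lam lamn, map_neg] at hsol hlam
  simp only [map_sub, sub_apply] at hsol hlam ⊢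
  rw [real_inner_comm]
  linarith

end BilinearForms

theorem stmt_16_general {V Q : Type*}
    [NormedAddCommGroup V] [InnerProductSpace ℝ V]
    [NormedAddCommGroup Q] [InnerProductSpace ℝ Q]
    (a : V →L[ℝ] V →L[ℝ] ℝ) (α γ : ℝ)
    (hcoer : ∀ v : V, α * ‖v‖ ^ 2 ≤ a v v)
    (hγ : ∀ w v : V, a w v ≤ γ * (‖w‖ * ‖v‖))
    (b : V →L[ℝ] Q →L[ℝ] ℝ) (β : ℝ) (hβ : 0 < β)
    (hinfsup : ∀ q : Q, β * ‖q‖ ≤ ‖b.flip q‖)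
    (f : V →L[ℝ] ℝ) (g : Q →L[ℝ] ℝ)
    (M : Set Q)
    (u un : V) (lam lamn : Q) (hlam : lam ∈ M) (hlamn : lamn ∈ M)
    (hsol1 : ∀ v : V, a u v + b v lam = f v)
    (hsol2 : ∀ q ∈ M, b u (q - lam) ≤ g (q - lam))
    (hcomp : b un lamn = g lamn)
    (ei : Q) (hei : ∀ q : Q, ⟪ei, q⟫ = b un q - g q)
    (Pi : Q → Q)
    (hPi : ∀ q : Q, ∀ η ∈ M, ⟪q - Pi q, η⟫ ≤ 0)
    (αLB γUB : ℝ) (hαLB : 0 < αLB) (hαLBle : αLB ≤ α) (hγUB : γ ≤ γUB)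
    (δ₀ δ₁ δ₂ c₁ c₂ : ℝ)
    (hδ₀ : δ₀ = ‖f - a un - b.flip lamn‖)
    (hδ₁ : δ₁ = ‖Pi ei‖) (hδ₂ : δ₂ = ⟪lamn, Pi ei⟫)
    (hc₁ : c₁ = (1 / (2 * αLB)) * (δ₀ + γUB * δ₁ / β))
    (hc₂ : c₂ = (1 / αLB) * (δ₀ * δ₁ / β + δ₂)) :
    ‖u - un‖ ≤ c₁ + Real.sqrt (c₁ ^ 2 + c₂) ∧
    ‖lam - lamn‖ ≤ (1 / β) * (δ₀ + γUB * (c₁ + Real.sqrt (c₁ ^ 2 + c₂))) := by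
  rcases lt_or_ge γUB 0 with hγUB0 | hγUB0
  · have := subsingleton_of_coercive_of_bound_lt a hcoer (fun v => hγ v v) (by linarith)
    have := subsingleton_of_infsup b hβ hinfsup
    simp [hc₁, hc₂, hδ₀, hδ₁, hδ₂, norm_of_subsingleton, Subsingleton.elim (Pi ei) 0]
  set e := u - un
  set ε := lam - lamn
  have hres := residual_eq_of_forall_apply_add_eq a b f un lamn hsol1
  have hsign : -b e ε ≤ δ₁ * ‖ε‖ + δ₂ :=
    hδ₁ ▸ hδ₂ ▸ neg_apply_sub_sub_le (hsol2 lamn hlamn) hcomp hei (hPi ei lam hlam)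
  have henergy : αLB * ‖e‖ ^ 2 ≤ δ₀ * ‖e‖ + δ₁ * ‖ε‖ + δ₂ := calc
    αLB * ‖e‖ ^ 2 ≤ α * ‖e‖ ^ 2 := by gcongr
    _ ≤ a e e := hcoer e
    _ = (f - a un - b.flip lamn) e + -b e ε := by
      rw [hres, add_apply, ContinuousLinearMap.flip_apply]; ring
    _ ≤ δ₀ * ‖e‖ + (δ₁ * ‖ε‖ + δ₂) :=
      add_le_add (hδ₀ ▸ (Real.le_norm_self _).trans ((f - a un - b.flip lamn).le_opNorm e)) hsign
    _ = δ₀ * ‖e‖ + δ₁ * ‖ε‖ + δ₂ := by ring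
  have hinf : β * ‖ε‖ ≤ δ₀ + γUB * ‖e‖ := calc
    β * ‖ε‖ ≤ ‖b.flip ε‖ := hinfsup ε
    _ = ‖(f - a un - b.flip lamn) - a e‖ := by rw [hres, add_sub_cancel_left]
    _ ≤ δ₀ + γUB * ‖e‖ := hδ₀ ▸ (norm_sub_le _ _).trans (add_le_add_right
      (a.norm_apply_le_of_forall_apply_le hγUB0
        (fun w v => (hγ w v).trans (by gcongr)) e) _)
  have he : ‖e‖ ≤ c₁ + √(c₁ ^ 2 + c₂) := le_add_sqrt_of_sq_le_s16 <| hc₁ ▸ hc₂ ▸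
    sq_le_of_energy_le_of_infsup_le hαLB hβ (hδ₁ ▸ norm_nonneg _) henergy hinf
  refine ⟨he, ?_⟩
  rw [one_div_mul_eq_div, le_div_iff₀ hβ, mul_comm]
  exact hinf.trans (by gcongr)

/-- Primal-only a posteriori error bounds with surrogate constants
`0 < α_LB ≤ α` and `γ_UB ≥ γ`. -/
theorem stmt_16 {V Q : Type*}
    [NormedAddCommGroup V] [InnerProductSpace ℝ V] [CompleteSpace V]
    [NormedAddCommGroup Q] [InnerProductSpace ℝ Q] [CompleteSpace Q]
    (a : V →L[ℝ] V →L[ℝ] ℝ) (α γ : ℝ) (hα : 0 < α)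
    (hcoer : ∀ v : V, α * ‖v‖ ^ 2 ≤ a v v)
    (hγ : ∀ w v : V, a w v ≤ γ * (‖w‖ * ‖v‖))
    (b : V →L[ℝ] Q →L[ℝ] ℝ) (β : ℝ) (hβ : 0 < β)
    (hinfsup : ∀ q : Q, β * ‖q‖ ≤ ‖b.flip q‖)
    (f : V →L[ℝ] ℝ) (g : Q →L[ℝ] ℝ)
    (M : Set Q) (hMne : M.Nonempty) (hMcl : IsClosed M) (hMcv : Convex ℝ M)
    (hMcone : ∀ c : ℝ, 0 ≤ c → ∀ q ∈ M, c • q ∈ M)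
    (u un : V) (lam lamn : Q) (hlam : lam ∈ M) (hlamn : lamn ∈ M)
    (hsol1 : ∀ v : V, a u v + b v lam = f v)
    (hsol2 : ∀ q ∈ M, b u (q - lam) ≤ g (q - lam))
    (hcomp : b un lamn = g lamn)
    (ei : Q) (hei : ∀ q : Q, ⟪ei, q⟫ = b un q - g q)
    (Pi : Q → Q) (hPiM : ∀ q : Q, Pi q ∈ M)
    (hPi : ∀ q : Q, ∀ η ∈ M, ⟪q - Pi q, η⟫ ≤ 0)
    (αLB γUB : ℝ) (hαLB : 0 < αLB) (hαLBle : αLB ≤ α) (hγUB : γ ≤ γUB)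
    (δ₀ δ₁ δ₂ c₁ c₂ : ℝ)
    (hδ₀ : δ₀ = ‖f - a un - b.flip lamn‖)
    (hδ₁ : δ₁ = ‖Pi ei‖) (hδ₂ : δ₂ = ⟪lamn, Pi ei⟫)
    (hc₁ : c₁ = (1 / (2 * αLB)) * (δ₀ + γUB * δ₁ / β))
    (hc₂ : c₂ = (1 / αLB) * (δ₀ * δ₁ / β + δ₂))
    (hpos : 0 ≤ c₁ ^ 2 + c₂) :
    ‖u - un‖ ≤ c₁ + Real.sqrt (c₁ ^ 2 + c₂) ∧
    ‖lam - lamn‖ ≤ (1 / β) * (δ₀ + γUB * (c₁ + Real.sqrt (c₁ ^ 2 + c₂))) :=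
  stmt_16_general a α γ hcoer hγ b β hβ hinfsup f g M u un lam lamn hlam hlamn hsol1 hsol2 hcomp ei
    hei Pi hPi αLB γUB hαLB hαLBle hγUB δ₀ δ₁ δ₂ c₁ c₂ hδ₀ hδ₁ hδ₂ hc₁ hc₂
end

section
/- (Parametrized primal-dual bounds with surrogate constants.) Let (u, λ) ∈ V × Q solve the KKT system: a(u,v) + b(v,λ) = f(v) for all v ∈ V; g(q) − b(u,q) ≥ 0 for all q ∈ M; λ ∈ M; g(λ) − b(u,λ) = 0. Let u_n ∈ V have nonnegative slack on M, i.e. s_n(q) := g(q) − b(u_n, q) ≥ 0 for all q ∈ M, let λ_n ∈ M, and r(v) := f(v) − a(u_n, v) − b(v, λ_n). Let α_LB and γ_UB be any constants with 0 < α_LB ≤ α and γ_UB ≥ γ, and set d₁ := ‖r‖_{V'}/(2α_LB) and d₂ := s_n(λ_n)/α_LB. Then ‖u − u_n‖_V ≤ Δ_u := d₁ + √(d₁² + d₂), and if β := inf_{q≠0} sup_{v≠0} b(v,q)/(‖q‖_Q‖v‖_V) > 0, then ‖λ − λ_n‖_Q ≤ (1/β)(‖r‖_{V'} + γ_UB Δ_u).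 -/
set_option maxHeartbeats 4000000

/-- Primal-dual a posteriori error bounds with surrogate constants
`0 < α_LB ≤ α` and `γ_UB ≥ γ`. -/
theorem stmt_17 {V Q : Type*}
    [NormedAddCommGroup V] [InnerProductSpace ℝ V] [CompleteSpace V]
    [NormedAddCommGroup Q] [InnerProductSpace ℝ Q] [CompleteSpace Q]
    (a : V →L[ℝ] V →L[ℝ] ℝ) (α γ : ℝ) (hα : 0 < α)
    (hcoer : ∀ v : V, α * ‖v‖ ^ 2 ≤ a v v)
    (hγ : ∀ w v : V, a w v ≤ γ * (‖w‖ * ‖v‖))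
    (b : V →L[ℝ] Q →L[ℝ] ℝ) (f : V →L[ℝ] ℝ) (g : Q →L[ℝ] ℝ)
    (M : Set Q) (hMne : M.Nonempty) (hMcl : IsClosed M) (hMcv : Convex ℝ M)
    (hMcone : ∀ c : ℝ, 0 ≤ c → ∀ q ∈ M, c • q ∈ M)
    (u : V) (lam : Q)
    (hsol1 : ∀ v : V, a u v + b v lam = f v)
    (hsol2 : ∀ q ∈ M, 0 ≤ g q - b u q)
    (hlam : lam ∈ M) (hcomp : g lam - b u lam = 0)
    (un : V) (hfeas : ∀ q ∈ M, 0 ≤ g q - b un q)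
    (lamn : Q) (hlamn : lamn ∈ M)
    (αLB γUB : ℝ) (hαLB : 0 < αLB) (hαLBle : αLB ≤ α) (hγUB : γ ≤ γUB)
    (d₁ d₂ : ℝ)
    (hd₁ : d₁ = ‖f - a un - b.flip lamn‖ / (2 * αLB))
    (hd₂ : d₂ = (g lamn - b un lamn) / αLB) :
    ‖u - un‖ ≤ d₁ + Real.sqrt (d₁ ^ 2 + d₂) ∧
    ∀ β : ℝ, 0 < β → (∀ q : Q, β * ‖q‖ ≤ ‖b.flip q‖) →
      ‖lam - lamn‖ ≤ (1 / β) *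
        (‖f - a un - b.flip lamn‖ + γUB * (d₁ + Real.sqrt (d₁ ^ 2 + d₂))) := by
  set r : V →L[ℝ] ℝ := f - a un - b.flip lamn with hr
  set e : V := u - un with he
  -- residual identity
  have hrv : ∀ v : V, r v = a e v + b v (lam - lamn) := by
    intro v
    have h1 := hsol1 v
    simp only [hr, he, ContinuousLinearMap.sub_apply, ContinuousLinearMap.flip_apply,
      map_sub, ContinuousLinearMap.sub_apply]
    linarith
  have hs : 0 ≤ g lamn - b un lamn := hfeas lamn hlamn
  have h1 : b un lam ≤ g lam := by have := hfeas lam hlam; linarith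
  have h2 : b u lamn ≤ g lamn := by have := hsol2 lamn hlamn; linarith
  -- key quadratic inequality
  have hbe : b e (lam - lamn) ≥ -(g lamn - b un lamn) := by
    have : b e (lam - lamn) = b u lam - b u lamn - b un lam + b un lamn := by
      simp only [he, map_sub, ContinuousLinearMap.sub_apply]; ring
    rw [this]; linarith
  have hre : r e ≤ ‖r‖ * ‖e‖ := by
    calc r e ≤ ‖r e‖ := le_abs_self _
    _ ≤ ‖r‖ * ‖e‖ := r.le_opNorm e
  have hquad : αLB * ‖e‖ ^ 2 ≤ ‖r‖ * ‖e‖ + (g lamn - b un lamn) := by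
    have hc := hcoer e
    have hid := hrv e
    have hn2 : (0:ℝ) ≤ ‖e‖ ^ 2 := sq_nonneg _
    nlinarith [mul_le_mul_of_nonneg_right hαLBle hn2]
  have hd₁' : ‖r‖ = 2 * αLB * d₁ := by
    rw [hd₁]; field_simp
  have hd₂' : g lamn - b un lamn = αLB * d₂ := by
    rw [hd₂]; field_simp
  have hsq : (‖e‖ - d₁) ^ 2 ≤ d₁ ^ 2 + d₂ := by
    rw [hd₁', hd₂'] at hquad
    nlinarith
  have hd₂nn : 0 ≤ d₂ := by
    rw [hd₂]; positivity
  have hprimal : ‖e‖ ≤ d₁ + Real.sqrt (d₁ ^ 2 + d₂) := by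
    have h := Real.sqrt_le_sqrt hsq
    rw [Real.sqrt_sq_eq_abs] at h
    have := le_abs_self (‖e‖ - d₁)
    linarith
  have hΔnn : 0 ≤ d₁ + Real.sqrt (d₁ ^ 2 + d₂) := le_trans (norm_nonneg e) hprimal
  refine ⟨hprimal, ?_⟩
  intro β hβ hinf
  -- identity for b.flip (lam - lamn)
  have hflip : b.flip (lam - lamn) = r - a e := by
    ext v
    have := hrv v
    simp only [ContinuousLinearMap.sub_apply, ContinuousLinearMap.flip_apply]
    linarith
  have hane : ‖a e‖ ≤ γUB * (d₁ + Real.sqrt (d₁ ^ 2 + d₂)) := by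
    by_cases hV : ∀ v : V, v = 0
    · have hr0 : r = 0 := by ext v; rw [hV v]; simp
      have ha0 : a e = 0 := by ext v; rw [hV v]; simp
      have hq0 : ∀ q : Q, q = 0 := by
        intro q
        have hb0 : b.flip q = 0 := by ext v; rw [hV v]; simp
        have h := hinf q
        rw [hb0, norm_zero] at h
        have hqn : ‖q‖ ≤ 0 := by nlinarith [norm_nonneg q]
        exact norm_le_zero_iff.mp hqn
      have hd₁0 : d₁ = 0 := by rw [hd₁, hr0]; simp
      have hd₂0 : d₂ = 0 := by rw [hd₂, hq0 lamn]; simp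
      rw [ha0, hd₁0, hd₂0]
      simp
    · push_neg at hV
      obtain ⟨v₀, hv₀⟩ := hV
      have hv₀n : 0 < ‖v₀‖ := norm_pos_iff.mpr hv₀
      have hγpos : 0 < γ := by
        have h1 := hcoer v₀
        have h2 := hγ v₀ v₀
        nlinarith [mul_pos hv₀n hv₀n]
      have hae : ‖a e‖ ≤ γ * ‖e‖ := by
        apply ContinuousLinearMap.opNorm_le_bound _ (by positivity)
        intro v
        have h1 := hγ e v
        have h2 := hγ e (-v)
        rw [norm_neg] at h2
        have h3 : a e (-v) = -(a e v) := map_neg _ _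
        rw [Real.norm_eq_abs, abs_le]
        constructor <;> nlinarith
      have hγUBpos : 0 < γUB := lt_of_lt_of_le hγpos hγUB
      calc ‖a e‖ ≤ γ * ‖e‖ := hae
        _ ≤ γUB * (d₁ + Real.sqrt (d₁ ^ 2 + d₂)) := by
            nlinarith [norm_nonneg e]
  have hb := hinf (lam - lamn)
  rw [hflip] at hb
  have hnorm : ‖r - a e‖ ≤ ‖r‖ + ‖a e‖ := norm_sub_le _ _
  rw [one_div, ← div_eq_inv_mul, le_div_iff₀ hβ]
  nlinarith [norm_nonneg (lam - lamn)]
end
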